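/- arXiv:1110.4253 — 4 statements merged into one kernel-verified Lean document; each statement's English description precedes it below -/
import Mathlib

section
/- Let (a_n)_{n=1}^∞ be a sequence of scalars with L := Σ_{n=1}^∞ |a_n|² (log₂(n+1))² < ∞. Then for every orthonormal system (φ_n)_{n=1}^∞ in L₂(X, dμ; H), choosing strongly measurable representatives of the φ_n, the orthogonal series Σ_{n=1}^∞ a_n φ_n(x) converges in the norm of H for μ-almost every x ∈ X. -/
/-!
Orthonormality gives `∫ ‖∑_{n ∈ s} aₙ φₙ‖² = ∑_{n ∈ s} |aₙ|²`. Let `S_m` be the partial sums and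
`σ_k = ∑_{2^k < n ≤ 2^{k+1}} |aₙ|²`; since `k + 1 ≤ 2 log₂ (n + 1)` on the `k`-th dyadic block,
`∑_k (k + 1)² σ_k ≤ 4 L`.

Hence `∑_k (k + 1)² ‖S_{2^{k+1}} - S_{2^k}‖²` has finite integral, so it is finite a.e., which
makes `∑_k ‖S_{2^{k+1}} - S_{2^k}‖` finite and `S_{2^k}` convergent. Within the `k`-th block, the
binary expansion of `m - 2^k` cuts `S_m - S_{2^k}` into at most one dyadic sub-block of each length
`2^j`, `j ≤ k`; by Cauchy–Schwarz `‖S_m - S_{2^k}‖² ≤ (k + 1) Σ_k`, where `Σ_k` sums the squared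
norms of all dyadic sub-blocks of `(2^k, 2^{k+1}]`. Since `∫ Σ_k = (k + 1) σ_k`, also
`∑_k (k + 1) Σ_k < ∞` a.e., so the oscillation inside the blocks tends to `0`.
-/

open MeasureTheory Filter Finset Topology
open scoped ENNReal

section Orthonormal

variable {X : Type*} [MeasurableSpace X] {μ : Measure X} {𝕜 : Type*} [RCLike 𝕜]
  {H : Type*} [NormedAddCommGroup H] [InnerProductSpace 𝕜 H]

theorem MeasureTheory.MemLp.integrable_inner {f g : X → H} (hf : MemLp f 2 μ) (hg : MemLp g 2 μ) :
    Integrable (fun x ↦ inner 𝕜 (f x) (g x)) μ :=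
  (hf.norm.integrable_mul hg.norm).mono (hf.1.inner hg.1) <| ae_of_all _ fun x ↦ by
    simpa using norm_inner_le_norm (𝕜 := 𝕜) (f x) (g x)

theorem integral_norm_sq_sum_smul_of_orthonormal {ι : Type*} [DecidableEq ι] (s : Finset ι)
    (a : ι → 𝕜) {φ : ι → X → H} (hφ : ∀ i ∈ s, MemLp (φ i) 2 μ)
    (horth : ∀ i ∈ s, ∀ j ∈ s, ∫ x, inner 𝕜 (φ i x) (φ j x) ∂μ = if i = j then 1 else 0) :
    ∫ x, ‖∑ i ∈ s, a i • φ i x‖ ^ 2 ∂μ = ∑ i ∈ s, ‖a i‖ ^ 2 := by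
  have hexpand : ∀ x, ‖∑ i ∈ s, a i • φ i x‖ ^ 2 =
      RCLike.re (∑ i ∈ s, ∑ j ∈ s, (starRingEnd 𝕜) (a i) * a j * inner 𝕜 (φ i x) (φ j x)) := by
    intro x
    rw [← inner_self_eq_norm_sq (𝕜 := 𝕜), sum_inner]
    simp_rw [inner_sum, inner_smul_left, inner_smul_right, mul_assoc]
  have hint : ∀ i ∈ s, ∀ j ∈ s, Integrable (fun x ↦ inner 𝕜 (φ i x) (φ j x)) μ :=
    fun i hi j hj ↦ (hφ i hi).integrable_inner (hφ j hj)
  simp_rw [hexpand]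
  rw [integral_re (integrable_finsetSum _ fun i hi ↦ integrable_finsetSum _ fun j hj ↦
      (hint i hi j hj).const_mul _), integral_finsetSum _ fun i hi ↦
      integrable_finsetSum _ fun j hj ↦ (hint i hi j hj).const_mul _, map_sum]
  refine sum_congr rfl fun i hi ↦ ?_
  rw [integral_finsetSum _ fun j hj ↦ (hint i hi j hj).const_mul _]
  simp_rw [integral_const_mul]
  rw [sum_congr rfl fun j hj ↦ by rw [horth i hi j hj]]
  simp [RCLike.conj_mul, hi]

theorem integrable_norm_sq_sum_smul {ι : Type*} (s : Finset ι) (a : ι → 𝕜) {φ : ι → X → H}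
    (hφ : ∀ i ∈ s, MemLp (φ i) 2 μ) :
    Integrable (fun x ↦ ‖∑ i ∈ s, a i • φ i x‖ ^ 2) μ := by
  have h : MemLp (fun x ↦ ∑ i ∈ s, a i • φ i x) 2 μ :=
    memLp_finsetSum s fun i hi ↦ (hφ i hi).const_smul (a i)
  exact (memLp_two_iff_integrable_sq_norm h.1).1 h

end Orthonormal

namespace Finset

variable {M : Type*} [AddCommMonoid M]

theorem sum_range_sum_Ioc_of_monotone (v : ℕ → M) {t : ℕ → ℕ} (ht : Monotone t) (K : ℕ) :
    ∑ j ∈ range K, ∑ n ∈ Ioc (t j) (t (j + 1)), v n = ∑ n ∈ Ioc (t 0) (t K), v n := by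
  induction K with
  | zero => simp
  | succ K ih =>
    rw [sum_range_succ, ih, sum_Ioc_consecutive v (ht K.zero_le) (ht (K.le_add_right 1))]

theorem sum_range_sum_Ioc_of_antitone (v : ℕ → M) {t : ℕ → ℕ} (ht : Antitone t) (K : ℕ) :
    ∑ j ∈ range K, ∑ n ∈ Ioc (t (j + 1)) (t j), v n = ∑ n ∈ Ioc (t K) (t 0), v n := by
  induction K with
  | zero => simp
  | succ K ih =>
    rw [sum_range_succ, ih, add_comm, sum_Ioc_consecutive v (ht (K.le_add_right 1)) (ht K.zero_le)]

end Finset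

section DyadicBlocks

variable {E : Type*} [SeminormedAddCommGroup E]

def dyadicSquareSum (v : ℕ → E) (N k : ℕ) : ℝ :=
  ∑ j ∈ range (k + 1), ∑ q ∈ range (2 ^ (k - j)),
    ‖∑ n ∈ Ioc (N + q * 2 ^ j) (N + (q + 1) * 2 ^ j), v n‖ ^ 2

theorem dyadicSquareSum_nonneg (v : ℕ → E) (N k : ℕ) : 0 ≤ dyadicSquareSum v N k :=
  sum_nonneg fun _ _ ↦ sum_nonneg fun _ _ ↦ sq_nonneg _

theorem div_two_pow_succ_mul_two_pow_succ (r j : ℕ) :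
    r / 2 ^ (j + 1) * 2 ^ (j + 1) = r / 2 ^ j / 2 * 2 * 2 ^ j := by
  rw [pow_succ, ← Nat.div_div_eq_div_mul]; ring

theorem antitone_div_two_pow_mul_two_pow (r : ℕ) : Antitone fun j ↦ r / 2 ^ j * 2 ^ j :=
  antitone_nat_of_succ_le fun j ↦ by
    rw [div_two_pow_succ_mul_two_pow_succ]
    exact Nat.mul_le_mul_right _ (Nat.div_mul_le_self _ 2)

/-- `r / 2 ^ j * 2 ^ j` is `r` with its `j` lowest binary digits cleared, so the segment is empty
or a single dyadic block, according to the `j`-th digit of `r`. -/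
theorem norm_sum_Ioc_digit_sq_le (v : ℕ → E) {N k r j : ℕ} (hr : r ≤ 2 ^ k) (hj : j ≤ k) :
    ‖∑ n ∈ Ioc (N + r / 2 ^ (j + 1) * 2 ^ (j + 1)) (N + r / 2 ^ j * 2 ^ j), v n‖ ^ 2 ≤
      ∑ q ∈ range (2 ^ (k - j)), ‖∑ n ∈ Ioc (N + q * 2 ^ j) (N + (q + 1) * 2 ^ j), v n‖ ^ 2 := by
  have hle : r / 2 ^ j * 2 ^ j ≤ 2 ^ (k - j) * 2 ^ j :=
    (Nat.div_mul_le_self _ _).trans (by rwa [← pow_add, Nat.sub_add_cancel hj])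
  rw [div_two_pow_succ_mul_two_pow_succ]
  generalize r / 2 ^ j = m at hle ⊢
  have hm := Nat.le_of_mul_le_mul_right hle (by positivity)
  rcases Nat.mod_two_eq_zero_or_one m with h0 | h1
  · rw [show m / 2 * 2 = m by omega, Ioc_self, sum_empty, norm_zero, zero_pow two_ne_zero]
    exact sum_nonneg fun _ _ ↦ sq_nonneg _
  · rw [show N + m * 2 ^ j = N + (m / 2 * 2 + 1) * 2 ^ j by congr 2; omega]
    exact single_le_sum (f := fun q ↦ ‖∑ n ∈ Ioc (N + q * 2 ^ j) (N + (q + 1) * 2 ^ j), v n‖ ^ 2)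
      (fun _ _ ↦ sq_nonneg _) (mem_range.2 (by omega))

theorem norm_sum_Ioc_sq_le_dyadicSquareSum (v : ℕ → E) {N k r : ℕ} (hr : r ≤ 2 ^ k) :
    ‖∑ n ∈ Ioc N (N + r), v n‖ ^ 2 ≤ (k + 1) * dyadicSquareSum v N k := by
  set t : ℕ → ℕ := fun j ↦ N + r / 2 ^ j * 2 ^ j
  have ht : Antitone t := fun i j hij ↦
    Nat.add_le_add_left (antitone_div_two_pow_mul_two_pow r hij) N
  have htop : t (k + 1) = N := by
    simp [t, Nat.div_eq_of_lt (hr.trans_lt (Nat.pow_lt_pow_succ one_lt_two))]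
  have hdecomp : ∑ n ∈ Ioc N (N + r), v n =
      ∑ j ∈ range (k + 1), ∑ n ∈ Ioc (t (j + 1)) (t j), v n := by
    rw [sum_range_sum_Ioc_of_antitone v ht, htop]; simp [t]
  calc ‖∑ n ∈ Ioc N (N + r), v n‖ ^ 2
      ≤ (∑ j ∈ range (k + 1), ‖∑ n ∈ Ioc (t (j + 1)) (t j), v n‖) ^ 2 := by
        rw [hdecomp]; gcongr; exact norm_sum_le _ _
    _ ≤ (k + 1) * ∑ j ∈ range (k + 1), ‖∑ n ∈ Ioc (t (j + 1)) (t j), v n‖ ^ 2 := by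
        simpa using sq_sum_le_card_mul_sum_sq (s := range (k + 1))
    _ ≤ (k + 1) * dyadicSquareSum v N k := by
        gcongr
        exact sum_le_sum fun j hj ↦
          norm_sum_Ioc_digit_sq_le v hr (Nat.lt_succ_iff.1 (mem_range.1 hj))

end DyadicBlocks

section DyadicConvergence

variable {α : Type*} [PseudoMetricSpace α] {s : ℕ → α}

theorem cauchySeq_of_summable_sq_mul_dist_sq
    (h : Summable fun k : ℕ ↦ ((k : ℝ) + 1) ^ 2 * dist (s k) (s (k + 1)) ^ 2) : CauchySeq s := by
  have hinv : Summable fun k : ℕ ↦ 1 / ((k : ℝ) + 1) ^ 2 := by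
    exact_mod_cast (summable_nat_add_iff 1).2 (Real.summable_one_div_nat_pow.2 one_lt_two)
  refine cauchySeq_of_summable_dist <| ((h.add hinv).div_const 2).of_nonneg_of_le
    (fun _ ↦ dist_nonneg) fun k ↦ ?_
  have hk : (0 : ℝ) < k + 1 := by positivity
  -- `2 d ≤ (k + 1)² d² + (k + 1)⁻²` is AM-GM
  have hamgm : ((k + 1) * dist (s k) (s (k + 1)) - 1 / (k + 1)) ^ 2 =
      ((k : ℝ) + 1) ^ 2 * dist (s k) (s (k + 1)) ^ 2 - 2 * dist (s k) (s (k + 1)) +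
        1 / ((k : ℝ) + 1) ^ 2 := by
    field_simp; ring
  have hsq := sq_nonneg ((k + 1) * dist (s k) (s (k + 1)) - 1 / (k + 1))
  linarith

theorem tendsto_of_tendsto_comp_two_pow {l : α} (hl : Tendsto (fun k ↦ s (2 ^ k)) atTop (𝓝 l))
    {b : ℕ → ℝ} (hb : Tendsto b atTop (𝓝 0))
    (hosc : ∀ k r, r ≤ 2 ^ k → dist (s (2 ^ k + r)) (s (2 ^ k)) ≤ b k) :
    Tendsto s atTop (𝓝 l) := by
  have hlog : Tendsto (Nat.log 2) atTop atTop :=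
    tendsto_atTop_atTop.2 fun k ↦ ⟨2 ^ k, fun m hm ↦ Nat.le_log_of_pow_le one_lt_two hm⟩
  rw [tendsto_iff_dist_tendsto_zero] at hl ⊢
  have hbound : ∀ m, m ≠ 0 →
      dist (s m) l ≤ b (Nat.log 2 m) + dist (s (2 ^ Nat.log 2 m)) l := by
    intro m hm
    set k := Nat.log 2 m
    have hlow : 2 ^ k ≤ m := Nat.pow_log_le_self 2 hm
    have hhigh : m < 2 ^ k * 2 := pow_succ 2 k ▸ Nat.lt_pow_succ_log_self one_lt_two m
    have hosc' := hosc k (m - 2 ^ k) (by omega)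
    rw [Nat.add_sub_cancel' hlow] at hosc'
    exact (dist_triangle _ _ _).trans (by gcongr)
  refine squeeze_zero' (Eventually.of_forall fun _ ↦ dist_nonneg)
    ((eventually_ne_atTop 0).mono hbound) ?_
  simpa using (hb.comp hlog).add (hl.comp hlog)

theorem exists_tendsto_sum_Ioc_of_summable_dyadicSquareSum {E : Type*} [SeminormedAddCommGroup E]
    [CompleteSpace E] {v : ℕ → E}
    (hosc : Summable fun k : ℕ ↦ ((k : ℝ) + 1) * dyadicSquareSum v (2 ^ k) k)
    (hdyadic : Summable fun k : ℕ ↦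
      ((k : ℝ) + 1) ^ 2 * ‖∑ n ∈ Ioc (2 ^ k) (2 ^ (k + 1)), v n‖ ^ 2) :
    ∃ l, Tendsto (fun m ↦ ∑ n ∈ Ioc 0 m, v n) atTop (𝓝 l) := by
  have hsub (b d : ℕ) (h : b ≤ d) :
      ∑ n ∈ Ioc 0 d, v n - ∑ n ∈ Ioc 0 b, v n = ∑ n ∈ Ioc b d, v n := by
    rw [← sum_Ioc_consecutive _ (Nat.zero_le b) h, add_sub_cancel_left]
  obtain ⟨l, hl⟩ := cauchySeq_tendsto_of_complete <| cauchySeq_of_summable_sq_mul_dist_sq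
    (s := fun k ↦ ∑ n ∈ Ioc 0 (2 ^ k), v n) <| hdyadic.congr fun k ↦ by
      rw [dist_comm, dist_eq_norm, hsub _ _ (pow_le_pow_right₀ one_le_two k.le_succ)]
  refine ⟨l, tendsto_of_tendsto_comp_two_pow hl
    (by simpa using hosc.tendsto_atTop_zero.sqrt) fun k r hr ↦ ?_⟩
  rw [dist_eq_norm, hsub _ _ (Nat.le_add_right _ r), Real.le_sqrt (norm_nonneg _)
    (mul_nonneg (by positivity) (dyadicSquareSum_nonneg _ _ _))]
  exact norm_sum_Ioc_sq_le_dyadicSquareSum v hr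

end DyadicConvergence

section SquareFunctionIntegral

variable {X : Type*} [MeasurableSpace X] {μ : Measure X} {E : Type*} [NormedAddCommGroup E]
  {F : ℕ → X → E}

theorem integrable_dyadicSquareSum
    (hint : ∀ b d, Integrable (fun x ↦ ‖∑ n ∈ Ioc b d, F n x‖ ^ 2) μ) (N k : ℕ) :
    Integrable (fun x ↦ dyadicSquareSum (fun n ↦ F n x) N k) μ :=
  integrable_finsetSum _ fun _ _ ↦ integrable_finsetSum _ fun _ _ ↦ hint _ _

theorem integral_dyadicSquareSum {c : ℕ → ℝ}
    (hint : ∀ b d, Integrable (fun x ↦ ‖∑ n ∈ Ioc b d, F n x‖ ^ 2) μ)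
    (hpyth : ∀ b d, ∫ x, ‖∑ n ∈ Ioc b d, F n x‖ ^ 2 ∂μ = ∑ n ∈ Ioc b d, c n) (N k : ℕ) :
    ∫ x, dyadicSquareSum (fun n ↦ F n x) N k ∂μ = (k + 1) * ∑ n ∈ Ioc N (N + 2 ^ k), c n := by
  unfold dyadicSquareSum
  rw [integral_finsetSum _ fun _ _ ↦ integrable_finsetSum _ fun _ _ ↦ hint _ _]
  have hlevel : ∀ j ∈ range (k + 1), ∫ x, ∑ q ∈ range (2 ^ (k - j)),
      ‖∑ n ∈ Ioc (N + q * 2 ^ j) (N + (q + 1) * 2 ^ j), F n x‖ ^ 2 ∂μ =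
        ∑ n ∈ Ioc N (N + 2 ^ k), c n := by
    intro j hj
    rw [integral_finsetSum _ fun _ _ ↦ hint _ _]
    simp_rw [hpyth]
    rw [sum_range_sum_Ioc_of_monotone c (t := fun q ↦ N + q * 2 ^ j)
      (fun _ _ h ↦ Nat.add_le_add_left (Nat.mul_le_mul_right _ h) N), zero_mul, add_zero, ← pow_add,
      Nat.sub_add_cancel (Nat.lt_succ_iff.1 (mem_range.1 hj))]
  rw [sum_congr rfl hlevel, sum_const, card_range, nsmul_eq_mul]
  push_cast
  ring

end SquareFunctionIntegral

section LogWeights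

theorem summable_sum_Ioc_of_monotone {W : ℕ → ℝ} (hW0 : ∀ n, 0 ≤ W n) (hW : Summable W)
    {t : ℕ → ℕ} (ht : Monotone t) : Summable fun k ↦ ∑ n ∈ Ioc (t k) (t (k + 1)), W n := by
  refine summable_of_sum_range_le (c := ∑' n, W n) (fun _ ↦ sum_nonneg fun n _ ↦ hW0 n) fun K ↦ ?_
  rw [sum_range_sum_Ioc_of_monotone W ht]
  exact hW.sum_le_tsum _ fun n _ ↦ hW0 n

theorem add_one_le_two_mul_logb {k n : ℕ} (h : 2 ^ k < n) :
    (k : ℝ) + 1 ≤ 2 * Real.logb 2 (n + 1) := by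
  have hk : (k : ℝ) ≤ Real.logb 2 (n + 1) := by
    rw [Real.le_logb_iff_rpow_le one_lt_two (by positivity), Real.rpow_natCast]
    exact_mod_cast (Nat.le_succ_of_le h.le)
  have h1 : (1 : ℝ) ≤ Real.logb 2 (n + 1) := by
    rw [Real.le_logb_iff_rpow_le one_lt_two (by positivity), Real.rpow_one]
    have : 1 ≤ n := Nat.one_le_two_pow.trans h.le
    exact_mod_cast Nat.succ_le_succ this
  linarith

theorem summable_sq_mul_sum_Ioc_two_pow {w : ℕ → ℝ} (hw : ∀ n, 0 ≤ w n)
    (h : Summable fun n : ℕ ↦ w n * Real.logb 2 (n + 1) ^ 2) :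
    Summable fun k : ℕ ↦ ((k : ℝ) + 1) ^ 2 * ∑ n ∈ Ioc (2 ^ k) (2 ^ (k + 1)), w n := by
  have hdyadic := (summable_sum_Ioc_of_monotone (fun n ↦ mul_nonneg (hw n) (sq_nonneg _)) h
    (pow_right_mono₀ one_le_two)).mul_left 4
  refine hdyadic.of_nonneg_of_le (fun k ↦ mul_nonneg (sq_nonneg _) (sum_nonneg fun n _ ↦ hw n))
    fun k ↦ ?_
  rw [mul_sum, mul_sum]
  refine sum_le_sum fun n hn ↦ ?_
  have hlog := add_one_le_two_mul_logb (mem_Ioc.1 hn).1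
  calc ((k : ℝ) + 1) ^ 2 * w n ≤ (2 * Real.logb 2 (n + 1)) ^ 2 * w n := by
        gcongr; exact hw n
    _ = 4 * (w n * Real.logb 2 (n + 1) ^ 2) := by ring

end LogWeights

theorem MeasureTheory.ae_summable_of_summable_integral {X : Type*} [MeasurableSpace X]
    {μ : Measure X} {g : ℕ → X → ℝ} (hg0 : ∀ k x, 0 ≤ g k x) (hg : ∀ k, Integrable (g k) μ)
    (hsum : Summable fun k ↦ ∫ x, g k x ∂μ) : ∀ᵐ x ∂μ, Summable fun k ↦ g k x := by
  have hmeas : ∀ k, AEMeasurable (fun x ↦ ENNReal.ofReal (g k x)) μ :=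
    fun k ↦ (hg k).aemeasurable.ennreal_ofReal
  have hfin : ∫⁻ x, ∑' k, ENNReal.ofReal (g k x) ∂μ ≠ ∞ := by
    rw [lintegral_tsum hmeas]
    simp_rw [← ofReal_integral_eq_lintegral_ofReal (hg _) (ae_of_all _ (hg0 _))]
    rw [← ENNReal.ofReal_tsum_of_nonneg (fun k ↦ integral_nonneg (hg0 k)) hsum]
    exact ENNReal.ofReal_ne_top
  filter_upwards [ae_lt_top' (AEMeasurable.tsum hmeas) hfin] with x hx
  exact (ENNReal.summable_toReal hx.ne).congr fun k ↦ ENNReal.toReal_ofReal (hg0 k x)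

/-- General Menshov–Rademacher theorem: a.e. convergence of the orthogonal series. -/
theorem menshov_rademacher_ae_convergence
    {X : Type*} [MeasurableSpace X] (μ : Measure X)
    {𝕜 : Type*} [RCLike 𝕜]
    {H : Type*} [NormedAddCommGroup H] [InnerProductSpace 𝕜 H] [CompleteSpace H]
    (a : ℕ → 𝕜) (φ : ℕ → X → H)
    (hmem : ∀ n, 1 ≤ n → MemLp (φ n) 2 μ)
    (horth : ∀ n m, 1 ≤ n → 1 ≤ m →
      ∫ x, (inner 𝕜 (φ n x) (φ m x) : 𝕜) ∂μ = if n = m then (1 : 𝕜) else 0)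
    (hL : Summable fun n : ℕ => ‖a (n + 1)‖ ^ 2 * (Real.logb 2 ((n : ℝ) + 2)) ^ 2) :
    ∀ᵐ x ∂μ, ∃ l : H,
      Tendsto (fun m : ℕ => ∑ n ∈ Finset.Icc 1 m, a n • φ n x) atTop (nhds l) := by
  have hone {b d n : ℕ} (hn : n ∈ Ioc b d) : 1 ≤ n := Nat.one_le_of_lt (mem_Ioc.1 hn).1
  have hint (b d : ℕ) : Integrable (fun x ↦ ‖∑ n ∈ Ioc b d, a n • φ n x‖ ^ 2) μ :=
    integrable_norm_sq_sum_smul _ a fun n hn ↦ hmem n (hone hn)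
  have hpyth (b d : ℕ) : ∫ x, ‖∑ n ∈ Ioc b d, a n • φ n x‖ ^ 2 ∂μ = ∑ n ∈ Ioc b d, ‖a n‖ ^ 2 :=
    integral_norm_sq_sum_smul_of_orthonormal _ a (fun n hn ↦ hmem n (hone hn))
      fun n hn m hm ↦ horth n m (hone hn) (hone hm)
  have hweights : Summable fun k : ℕ ↦
      ((k : ℝ) + 1) ^ 2 * ∑ n ∈ Ioc (2 ^ k) (2 ^ (k + 1)), ‖a n‖ ^ 2 :=
    summable_sq_mul_sum_Ioc_two_pow (fun n ↦ sq_nonneg _) <|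
      (summable_nat_add_iff 1).1 <| hL.congr fun n ↦ by push_cast; ring_nf
  have hosc : ∀ᵐ x ∂μ, Summable fun k : ℕ ↦
      ((k : ℝ) + 1) * dyadicSquareSum (fun n ↦ a n • φ n x) (2 ^ k) k :=
    ae_summable_of_summable_integral
      (fun k x ↦ mul_nonneg (by positivity) (dyadicSquareSum_nonneg _ _ _))
      (fun k ↦ (integrable_dyadicSquareSum hint _ k).const_mul _) <|
      hweights.congr fun k ↦ by
        rw [integral_const_mul, integral_dyadicSquareSum hint hpyth, ← two_mul, ← pow_succ']
        ring
  have hdyadic : ∀ᵐ x ∂μ, Summable fun k : ℕ ↦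
      ((k : ℝ) + 1) ^ 2 * ‖∑ n ∈ Ioc (2 ^ k) (2 ^ (k + 1)), a n • φ n x‖ ^ 2 :=
    ae_summable_of_summable_integral (fun k x ↦ by positivity)
      (fun k ↦ (hint _ _).const_mul _) <| hweights.congr fun k ↦ by rw [integral_const_mul, hpyth]
  filter_upwards [hosc, hdyadic] with x hosc hdyadic
  simp_rw [show ∀ m, Icc 1 m = Ioc 0 m from Icc_add_one_left_eq_Ioc 0]
  exact exists_tendsto_sum_Ioc_of_summable_dyadicSquareSum hosc hdyadic
end

section
/- Let (a_n)_{n=1}^∞ be a sequence of scalars with L := Σ_{n=1}^∞ |a_n|² (log₂(n+1))² < ∞, and let (φ_n)_{n=1}^∞ be an orthonormal system in L₂(X, dμ; H). Define the majorant of partial sums S*(x) := sup_{m ∈ ℕ} ‖Σ_{n=1}^m a_n φ_n(x)‖_H for x ∈ X. Then (∫_X S*(x)² dμ(x))^{1/2} ≤ 4 √L. -/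
/-!
Write `S m = ∑_{n ≤ m} a n φ n`. If `2 ^ J ≤ m < 2 ^ (J + 1)`, the binary expansion of `m`
splits `S m` into `S (2 ^ J)`, a sum over the dyadic shells `(2 ^ (j - 1), 2 ^ j]` with `j ≤ J`,
plus at most `J` block sums over dyadic cells `(k 2 ^ j, (k + 1) 2 ^ j]` with `2 ^ (J - j) ≤ k`.
Cauchy–Schwarz with weights `(j + 1) (j + 2)` on the shells (whose reciprocals sum to at most `1`)
and with the factor `J ≤ j + log₂ k` on the cells bounds `‖S m‖ ^ 2`, simultaneously for all
`m ≤ N`, by twice a fixed weighted sum of squared block sums. By orthonormality a squared block sum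
integrates to the sum of `|a n| ^ 2` over the block, and each index `n` carries total weight at
most `7 log₂ (n + 1) ^ 2` from the shells and `log₂ (n + 1) ^ 2` from the cells. Hence every
finite maximum of `‖S m‖ ^ 2` has integral at most `16 L`, and monotone convergence finishes the
proof.
-/

open MeasureTheory Finset
open scoped ENNReal

namespace MenshovRademacher

def dyadicCell (j k : ℕ) : Finset ℕ := Ioc (k * 2 ^ j) (k * 2 ^ j + 2 ^ j)

/-- `(2 ^ (j - 1), 2 ^ j]`; natural-number division makes it `{1}` for `j = 0`. -/
def dyadicShell (j : ℕ) : Finset ℕ := Ioc (2 ^ j / 2) (2 ^ j)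

/-- The piece of `(0, m]` contributed by bit `j` of `m` when that bit is set. -/
def binaryBlock (m j : ℕ) : Finset ℕ := dyadicCell j (2 * (m / 2 ^ (j + 1)))

theorem binaryBlock_of_lt {m j : ℕ} (hm : m < 2 ^ (j + 1)) : binaryBlock m j = Ioc 0 (2 ^ j) := by
  simp [binaryBlock, dyadicCell, Nat.div_eq_of_lt hm]

theorem binaryBlock_two_pow_add {M j : ℕ} (hj : j < M) (t : ℕ) :
    binaryBlock (2 ^ M + t) j = (binaryBlock t j).map (addLeftEmbedding (2 ^ M)) := by
  have hM : 2 ^ M = 2 ^ (j + 1) * 2 ^ (M - (j + 1)) := by rw [← pow_add]; congr 1; omega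
  have hdiv : (2 ^ M + t) / 2 ^ (j + 1) = 2 ^ (M - (j + 1)) + t / 2 ^ (j + 1) := by
    rw [hM, Nat.mul_add_div (by positivity)]
  rw [binaryBlock, binaryBlock, dyadicCell, dyadicCell, map_add_left_Ioc, hdiv, hM, pow_succ]
  congr 1 <;> ring

theorem sum_Ioc_zero_eq_sum_binaryBlock {E : Type*} [AddCommMonoid E] (v : ℕ → E) {M m : ℕ}
    (hm : m < 2 ^ M) :
    ∑ n ∈ Ioc 0 m, v n = ∑ j ∈ range M with m.testBit j, ∑ n ∈ binaryBlock m j, v n := by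
  induction M generalizing m v with
  | zero =>
    obtain rfl : m = 0 := by simpa using hm
    simp
  | succ M ih =>
    rcases lt_or_ge m (2 ^ M) with hlt | hge
    · rw [range_add_one, filter_insert, if_neg (by simp [Nat.testBit_lt_two_pow hlt]), ih v hlt]
    obtain ⟨t, rfl⟩ := Nat.exists_eq_add_of_le hge
    have ht : t < 2 ^ M := by rw [pow_succ] at hm; omega
    have hbits : ∀ j ∈ range M, (2 ^ M + t).testBit j ↔ t.testBit j :=
      fun j hj => by rw [Nat.testBit_two_pow_add_gt (mem_range.1 hj)]
    rw [range_add_one, filter_insert,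
      if_pos (by simp [Nat.testBit_two_pow_add_eq, Nat.testBit_lt_two_pow ht]),
      sum_insert (by simp), binaryBlock_of_lt hm, filter_congr hbits,
      ← sum_Ioc_consecutive v (Nat.zero_le _) (Nat.le_add_right _ _)]
    congr 1
    rw [show Ioc (2 ^ M) (2 ^ M + t) = (Ioc 0 t).map (addLeftEmbedding (2 ^ M)) by
      rw [map_add_left_Ioc, add_zero], sum_map, ih _ ht]
    refine sum_congr rfl fun j hj => ?_
    rw [binaryBlock_two_pow_add (mem_range.1 (mem_filter.1 hj).1), sum_map]

theorem sum_Ioc_zero_eq_add_sum_binaryBlock {E : Type*} [AddCommMonoid E] (v : ℕ → E) {J t : ℕ}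
    (ht : t < 2 ^ J) :
    ∑ n ∈ Ioc 0 (2 ^ J + t), v n = ∑ n ∈ Ioc 0 (2 ^ J), v n
      + ∑ j ∈ range J with (2 ^ J + t).testBit j, ∑ n ∈ binaryBlock (2 ^ J + t) j, v n := by
  have hlt : 2 ^ J + t < 2 ^ (J + 1) := by rw [pow_succ]; omega
  rw [sum_Ioc_zero_eq_sum_binaryBlock v hlt, range_add_one, filter_insert,
    if_pos (by simp [Nat.testBit_two_pow_add_eq, Nat.testBit_lt_two_pow ht]),
    sum_insert (by simp), binaryBlock_of_lt hlt]

theorem sum_Ioc_zero_two_pow_eq_sum_dyadicShell {E : Type*} [AddCommMonoid E] (v : ℕ → E)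
    (K : ℕ) : ∑ n ∈ Ioc 0 (2 ^ K), v n = ∑ j ∈ range (K + 1), ∑ n ∈ dyadicShell j, v n := by
  induction K with
  | zero => simp [dyadicShell]
  | succ K ih =>
    rw [sum_range_succ, ← ih, ← sum_Ioc_consecutive v (Nat.zero_le _)
      (Nat.pow_le_pow_right two_pos K.le_succ), dyadicShell, pow_succ, Nat.mul_div_cancel _ two_pos]

theorem exists_binaryBlock_eq_dyadicCell {m j J : ℕ} (hj : j < J) (hJ : 2 ^ J ≤ m) :
    ∃ k ∈ Ico 2 (m + 1), J ≤ j + Nat.log 2 k ∧ binaryBlock m j = dyadicCell j k := by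
  set q := m / 2 ^ (j + 1)
  have hq : 2 ^ (J - (j + 1)) ≤ q := by
    rw [Nat.le_div_iff_mul_le (by positivity), ← pow_add]
    exact le_trans (Nat.pow_le_pow_right two_pos (by omega)) hJ
  have hq1 : 1 ≤ 2 ^ (J - (j + 1)) := Nat.one_le_two_pow
  have hqm : 2 ^ (j + 1) * q ≤ m := Nat.mul_div_le m _
  have h2 : 2 ≤ 2 ^ (j + 1) := le_self_pow₀ one_le_two (by omega)
  have hlog : J - j ≤ Nat.log 2 (2 * q) := by
    refine Nat.le_log_of_pow_le one_lt_two ?_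
    rw [show J - j = J - (j + 1) + 1 by omega, pow_succ']
    omega
  exact ⟨2 * q, mem_Ico.2 ⟨by omega, by nlinarith⟩, by omega, rfl⟩

def shellWeight (j : ℕ) : ℝ := ((j : ℝ) + 1) * ((j : ℝ) + 2)

def cellWeight (p : ℕ × ℕ) : ℝ := ((p.1 + Nat.log 2 p.2 : ℕ) : ℝ)

theorem shellWeight_pos (j : ℕ) : 0 < shellWeight j := by
  unfold shellWeight
  positivity

theorem cellWeight_nonneg (p : ℕ × ℕ) : 0 ≤ cellWeight p := Nat.cast_nonneg _

theorem sum_range_inv_shellWeight (n : ℕ) : ∑ j ∈ range n, (shellWeight j)⁻¹ = n / (n + 1) := by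
  induction n with
  | zero => simp
  | succ n ih =>
    rw [sum_range_succ, ih, shellWeight]
    push_cast
    field_simp
    ring

section Pointwise

variable {E : Type*} [SeminormedAddCommGroup E]

theorem norm_sum_Ioc_two_pow_sq_le (u : ℕ → E) (J : ℕ) :
    ‖∑ n ∈ Ioc 0 (2 ^ J), u n‖ ^ 2
      ≤ ∑ j ∈ range (J + 1), shellWeight j * ‖∑ n ∈ dyadicShell j, u n‖ ^ 2 := by
  set D : ℕ → ℝ := fun j => ‖∑ n ∈ dyadicShell j, u n‖
  have hinv : ∑ j ∈ range (J + 1), (shellWeight j)⁻¹ ≤ 1 := by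
    rw [sum_range_inv_shellWeight, div_le_one (by positivity)]
    linarith
  calc ‖∑ n ∈ Ioc 0 (2 ^ J), u n‖ ^ 2 ≤ (∑ j ∈ range (J + 1), D j) ^ 2 := by
        rw [sum_Ioc_zero_two_pow_eq_sum_dyadicShell]
        gcongr
        exact norm_sum_le _ _
    _ ≤ (∑ j ∈ range (J + 1), D j) ^ 2 / ∑ j ∈ range (J + 1), (shellWeight j)⁻¹ :=
        le_div_self (by positivity)
          (sum_pos (fun j _ => inv_pos.2 (shellWeight_pos j)) nonempty_range_add_one) hinv
    _ ≤ ∑ j ∈ range (J + 1), D j ^ 2 / (shellWeight j)⁻¹ :=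
        sq_sum_div_le_sum_sq_div _ _ fun j _ => inv_pos.2 (shellWeight_pos j)
    _ = _ := by simp only [D, div_inv_eq_mul, mul_comm]

theorem norm_sum_binaryBlock_sq_le (u : ℕ → E) {m J : ℕ} (hJ : 2 ^ J ≤ m) :
    ‖∑ j ∈ range J with m.testBit j, ∑ n ∈ binaryBlock m j, u n‖ ^ 2
      ≤ ∑ p ∈ range J ×ˢ Ico 2 (m + 1), cellWeight p * ‖∑ n ∈ dyadicCell p.1 p.2, u n‖ ^ 2 := by
  set bits := {j ∈ range J | m.testBit j}
  set B : ℕ → ℝ := fun j => ‖∑ n ∈ binaryBlock m j, u n‖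
  set C : ℕ → ℕ → ℝ := fun j k => cellWeight (j, k) * ‖∑ n ∈ dyadicCell j k, u n‖ ^ 2
  have hblock : ∀ j ∈ bits, (J : ℝ) * B j ^ 2 ≤ ∑ k ∈ Ico 2 (m + 1), C j k := by
    intro j hj
    obtain ⟨k, hk, hJk, hjk⟩ :=
      exists_binaryBlock_eq_dyadicCell (mem_range.1 (mem_filter.1 hj).1) hJ
    calc (J : ℝ) * B j ^ 2 ≤ C j k := by
          simp only [B, C, cellWeight, hjk]
          gcongr
      _ ≤ _ := single_le_sum (f := C j)
          (fun k _ => mul_nonneg (cellWeight_nonneg _) (sq_nonneg _)) hk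
  calc _ ≤ (∑ j ∈ bits, B j) ^ 2 := by
        gcongr
        exact norm_sum_le _ _
    _ ≤ #bits * ∑ j ∈ bits, B j ^ 2 := sq_sum_le_card_mul_sum_sq
    _ ≤ J * ∑ j ∈ bits, B j ^ 2 := by
        gcongr
        exact_mod_cast (card_filter_le _ _).trans (card_range J).le
    _ = ∑ j ∈ bits, J * B j ^ 2 := mul_sum _ _ _
    _ ≤ ∑ j ∈ bits, ∑ k ∈ Ico 2 (m + 1), C j k := sum_le_sum hblock
    _ ≤ ∑ j ∈ range J, ∑ k ∈ Ico 2 (m + 1), C j k :=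
        sum_le_sum_of_subset_of_nonneg (filter_subset _ _)
          fun _ _ _ => sum_nonneg fun _ _ => mul_nonneg (cellWeight_nonneg _) (sq_nonneg _)
    _ = _ := by rw [sum_product]

def dyadicMajorant (N : ℕ) (u : ℕ → E) : ℝ :=
  ∑ j ∈ range (Nat.log 2 N + 1), shellWeight j * ‖∑ n ∈ dyadicShell j, u n‖ ^ 2
    + ∑ p ∈ range (Nat.log 2 N) ×ˢ Ico 2 (N + 1),
        cellWeight p * ‖∑ n ∈ dyadicCell p.1 p.2, u n‖ ^ 2

theorem dyadicMajorant_nonneg (N : ℕ) (u : ℕ → E) : 0 ≤ dyadicMajorant N u := by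
  unfold dyadicMajorant shellWeight cellWeight
  positivity

theorem norm_sum_Ioc_sq_le_dyadicMajorant (u : ℕ → E) {m N : ℕ} (hm : m ≠ 0) (hmN : m ≤ N) :
    ‖∑ n ∈ Ioc 0 m, u n‖ ^ 2 ≤ 2 * dyadicMajorant N u := by
  have hlo := Nat.pow_log_le_self 2 hm
  have hhi := Nat.lt_pow_succ_log_self one_lt_two m
  obtain ⟨J, t, ht, rfl⟩ : ∃ J t, t < 2 ^ J ∧ m = 2 ^ J + t :=
    ⟨Nat.log 2 m, m - 2 ^ Nat.log 2 m, by rw [Nat.pow_succ] at hhi; omega, by omega⟩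
  have hJN : J ≤ Nat.log 2 N := Nat.le_log_of_pow_le one_lt_two (by omega)
  rw [sum_Ioc_zero_eq_add_sum_binaryBlock u ht]
  set A := ∑ n ∈ Ioc 0 (2 ^ J), u n
  set B := ∑ j ∈ range J with (2 ^ J + t).testBit j, ∑ n ∈ binaryBlock (2 ^ J + t) j, u n
  have hA := (norm_sum_Ioc_two_pow_sq_le u J).trans <| sum_le_sum_of_subset_of_nonneg
    (range_subset_range.2 (by omega : J + 1 ≤ Nat.log 2 N + 1))
    fun j _ _ => mul_nonneg (shellWeight_pos j).le (sq_nonneg _)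
  have hB := (norm_sum_binaryBlock_sq_le u le_self_add).trans <| sum_le_sum_of_subset_of_nonneg
    (product_subset_product (range_subset_range.2 hJN)
      (Ico_subset_Ico_right (by omega : 2 ^ J + t + 1 ≤ N + 1)))
    fun p _ _ => mul_nonneg (cellWeight_nonneg p) (sq_nonneg _)
  calc ‖A + B‖ ^ 2 ≤ (‖A‖ + ‖B‖) ^ 2 := by
        gcongr
        exact norm_add_le _ _
    _ ≤ 2 * (‖A‖ ^ 2 + ‖B‖ ^ 2) := add_sq_le
    _ ≤ 2 * dyadicMajorant N u := by
        unfold dyadicMajorant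
        gcongr 2 * ?_
        exact add_le_add hA hB

end Pointwise

theorem natLog_le_logb_add_one {m n : ℕ} (h : m ≤ n + 1) :
    (Nat.log 2 m : ℝ) ≤ Real.logb 2 (n + 1) := by
  calc (Nat.log 2 m : ℝ) ≤ Nat.log 2 (n + 1) := by exact_mod_cast Nat.log_mono_right h
    _ ≤ Real.logb 2 (n + 1) := by exact_mod_cast Real.natLog_le_logb (n + 1) 2

theorem mul_le_natLog_sq_of_mem_dyadicShell {j n : ℕ} (hn : n ∈ dyadicShell j) :
    (j + 1) * (j + 2) ≤ 7 * Nat.log 2 (n + 1) ^ 2 := by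
  obtain ⟨hlo, -⟩ := mem_Ioc.1 hn
  have key : ∀ c, 2 ^ c ≤ n + 1 → c ≤ Nat.log 2 (n + 1) :=
    fun c h => Nat.le_log_of_pow_le one_lt_two h
  match j, hlo with
  | 0, hlo | 1, hlo =>
    have := key 1 (by simp at hlo; omega)
    nlinarith
  | 2, hlo =>
    have := key 2 (by simp at hlo; omega)
    nlinarith
  | j + 3, hlo =>
    rw [pow_succ, Nat.mul_div_cancel _ two_pos] at hlo
    have := key (j + 2) (by omega)
    nlinarith

theorem shellWeight_le_logb_sq {j n : ℕ} (hn : n ∈ dyadicShell j) :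
    shellWeight j ≤ 7 * Real.logb 2 (n + 1) ^ 2 := by
  have hlog := natLog_le_logb_add_one (le_refl (n + 1))
  calc shellWeight j = (((j + 1) * (j + 2) : ℕ) : ℝ) := by push_cast [shellWeight]; rfl
    _ ≤ 7 * (Nat.log 2 (n + 1) : ℝ) ^ 2 := by
        exact_mod_cast mul_le_natLog_sq_of_mem_dyadicShell hn
    _ ≤ 7 * Real.logb 2 (n + 1) ^ 2 := by gcongr

/-- For each level `j` at most one cell contains `n`, and it does so only when `2 ^ (j + 1) < n`. -/
theorem sum_add_log_le_natLog_sq (n : ℕ) {s : Finset (ℕ × ℕ)} (hs : ∀ p ∈ s, 2 ≤ p.2) :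
    ∑ p ∈ s with n ∈ dyadicCell p.1 p.2, (p.1 + Nat.log 2 p.2) ≤ Nat.log 2 n ^ 2 := by
  set S := {p ∈ s | n ∈ dyadicCell p.1 p.2}
  have hcell : ∀ p ∈ S, 2 ≤ p.2 ∧ p.2 * 2 ^ p.1 < n ∧ n ≤ (p.2 + 1) * 2 ^ p.1 := by
    intro p hp
    obtain ⟨hps, hn⟩ := mem_filter.1 hp
    obtain ⟨hlo, hhi⟩ := mem_Ioc.1 hn
    exact ⟨hs p hps, hlo, by linarith⟩
  have hweight : ∀ p ∈ S, p.1 + Nat.log 2 p.2 ≤ Nat.log 2 n := by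
    intro p hp
    obtain ⟨hk, hlo, -⟩ := hcell p hp
    refine Nat.le_log_of_pow_le one_lt_two ?_
    calc 2 ^ (p.1 + Nat.log 2 p.2) = 2 ^ Nat.log 2 p.2 * 2 ^ p.1 := by rw [pow_add, mul_comm]
      _ ≤ p.2 * 2 ^ p.1 := Nat.mul_le_mul_right _ (Nat.pow_log_le_self 2 (by omega))
      _ ≤ n := hlo.le
  have hlevel : ∀ p ∈ S, p.1 < Nat.log 2 n := by
    intro p hp
    have := Nat.log_pos one_lt_two (hcell p hp).1
    have := hweight p hp
    omega
  have hinj : Set.InjOn Prod.fst (S : Set (ℕ × ℕ)) := by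
    rintro ⟨j, k⟩ hp ⟨j', k'⟩ hp' (rfl : j = j')
    obtain ⟨-, hlo, hhi⟩ := hcell _ hp
    obtain ⟨-, hlo', hhi'⟩ := hcell _ hp'
    have h1 := Nat.lt_of_mul_lt_mul_right (hlo.trans_le hhi')
    have h2 := Nat.lt_of_mul_lt_mul_right (hlo'.trans_le hhi)
    simp only at h1 h2
    rw [Prod.mk.injEq]
    omega
  have hcard : #S ≤ Nat.log 2 n :=
    (card_le_card_of_injOn Prod.fst (fun p hp => mem_range.2 (hlevel p hp)) hinj).trans
      (card_range _).le
  calc ∑ p ∈ S, (p.1 + Nat.log 2 p.2) ≤ ∑ _p ∈ S, Nat.log 2 n := sum_le_sum hweight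
    _ = #S * Nat.log 2 n := by rw [sum_const, smul_eq_mul]
    _ ≤ Nat.log 2 n ^ 2 := by rw [sq]; exact Nat.mul_le_mul_right _ hcard

theorem sum_cellWeight_le_logb_sq (n : ℕ) {s : Finset (ℕ × ℕ)} (hs : ∀ p ∈ s, 2 ≤ p.2) :
    ∑ p ∈ s with n ∈ dyadicCell p.1 p.2, cellWeight p ≤ Real.logb 2 (n + 1) ^ 2 := by
  calc ∑ p ∈ s with n ∈ dyadicCell p.1 p.2, cellWeight p
      = ((∑ p ∈ s with n ∈ dyadicCell p.1 p.2, (p.1 + Nat.log 2 p.2) : ℕ) : ℝ) := by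
        rw [Nat.cast_sum]
        rfl
    _ ≤ (Nat.log 2 n : ℝ) ^ 2 := by exact_mod_cast sum_add_log_le_natLog_sq n hs
    _ ≤ Real.logb 2 (n + 1) ^ 2 := by gcongr; exact natLog_le_logb_add_one (Nat.le_succ n)

theorem sum_mul_sum_le_sum_mul {ι κ R : Type*} [DecidableEq κ] [CommSemiring R] [PartialOrder R]
    [IsOrderedRing R] {s : Finset ι} {T : Finset κ} {F : ι → Finset κ} (hF : ∀ i ∈ s, F i ⊆ T)
    (c : ι → R) {b w : κ → R} (hb : ∀ n ∈ T, 0 ≤ b n)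
    (hw : ∀ n ∈ T, ∑ i ∈ s with n ∈ F i, c i ≤ w n) :
    ∑ i ∈ s, c i * ∑ n ∈ F i, b n ≤ ∑ n ∈ T, b n * w n := by
  calc ∑ i ∈ s, c i * ∑ n ∈ F i, b n = ∑ i ∈ s, ∑ n ∈ T, if n ∈ F i then b n * c i else 0 := by
        refine sum_congr rfl fun i hi => ?_
        rw [sum_ite_mem, inter_eq_right.2 (hF i hi), mul_sum]
        exact sum_congr rfl fun n _ => mul_comm _ _
    _ = ∑ n ∈ T, b n * ∑ i ∈ s with n ∈ F i, c i := by
        rw [sum_comm]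
        refine sum_congr rfl fun n _ => ?_
        rw [sum_filter, mul_sum]
        exact sum_congr rfl fun i _ => by split_ifs <;> simp
    _ ≤ _ := sum_le_sum fun n hn => mul_le_mul_of_nonneg_left (hw n hn) (hb n hn)

theorem sum_shellWeight_mul_le {b : ℕ → ℝ} (hb : ∀ n, 0 ≤ b n) (K : ℕ) :
    ∑ j ∈ range (K + 1), shellWeight j * ∑ n ∈ dyadicShell j, b n
      ≤ 7 * ∑ n ∈ Ioc 0 (2 ^ K), b n * Real.logb 2 (n + 1) ^ 2 := by
  rw [sum_Ioc_zero_two_pow_eq_sum_dyadicShell, mul_sum]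
  refine sum_le_sum fun j _ => ?_
  rw [mul_sum, mul_sum]
  refine sum_le_sum fun n hn => ?_
  rw [mul_left_comm, mul_comm (b n)]
  exact mul_le_mul_of_nonneg_right (shellWeight_le_logb_sq hn) (hb n)

theorem sum_cellWeight_mul_le {b : ℕ → ℝ} (hb : ∀ n, 0 ≤ b n) (K N : ℕ) :
    ∑ p ∈ range K ×ˢ Ico 2 (N + 1), cellWeight p * ∑ n ∈ dyadicCell p.1 p.2, b n
      ≤ ∑ n ∈ Ioc 0 ((N + 1) * 2 ^ K), b n * Real.logb 2 (n + 1) ^ 2 := by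
  have hcell : ∀ p ∈ range K ×ˢ Ico 2 (N + 1),
      dyadicCell p.1 p.2 ⊆ Ioc 0 ((N + 1) * 2 ^ K) := by
    intro p hp n hn
    obtain ⟨hj, hk⟩ := mem_product.1 hp
    obtain ⟨hlo, hhi⟩ := mem_Ioc.1 hn
    refine mem_Ioc.2 ⟨by omega, ?_⟩
    calc n ≤ (p.2 + 1) * 2 ^ p.1 := by rw [add_one_mul]; exact hhi
      _ ≤ (N + 1) * 2 ^ K :=
        Nat.mul_le_mul (mem_Ico.1 hk).2 (Nat.pow_le_pow_right two_pos (mem_range.1 hj).le)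
  exact sum_mul_sum_le_sum_mul hcell _ (fun n _ => hb n)
    fun n _ => sum_cellWeight_le_logb_sq n fun p hp => (mem_Ico.1 (mem_product.1 hp).2).1

section L2

variable {X : Type*} [MeasurableSpace X] {μ : Measure X} {𝕜 : Type*} [RCLike 𝕜]
  {H : Type*} [NormedAddCommGroup H] [InnerProductSpace 𝕜 H]

theorem integrable_inner_of_memLp {f g : X → H} (hf : MemLp f 2 μ) (hg : MemLp g 2 μ) :
    Integrable (fun x => inner 𝕜 (f x) (g x)) μ :=
  (L2.integrable_inner (𝕜 := 𝕜) (hf.toLp f) (hg.toLp g)).congr <| by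
    filter_upwards [hf.coeFn_toLp, hg.coeFn_toLp] with x hfx hgx
    rw [hfx, hgx]

variable {κ : Type*} {a : κ → 𝕜} {φ : κ → X → H}

theorem integral_norm_sum_smul_sq [DecidableEq κ] {s : Finset κ}
    (hmem : ∀ n ∈ s, MemLp (φ n) 2 μ)
    (horth : ∀ n m, n ∈ s → m ∈ s → ∫ x, inner 𝕜 (φ n x) (φ m x) ∂μ = if n = m then 1 else 0) :
    ∫ x, ‖∑ n ∈ s, a n • φ n x‖ ^ 2 ∂μ = ∑ n ∈ s, ‖a n‖ ^ 2 := by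
  have hint : ∀ n ∈ s, ∀ m ∈ s,
      Integrable (fun x => starRingEnd 𝕜 (a n) * a m * inner 𝕜 (φ n x) (φ m x)) μ :=
    fun n hn m hm => (integrable_inner_of_memLp (hmem n hn) (hmem m hm)).const_mul _
  have hexpand : ∀ x, ‖∑ n ∈ s, a n • φ n x‖ ^ 2 = RCLike.re
      (∑ n ∈ s, ∑ m ∈ s, starRingEnd 𝕜 (a n) * a m * inner 𝕜 (φ n x) (φ m x)) := by
    intro x
    rw [← inner_self_eq_norm_sq (𝕜 := 𝕜), sum_inner]
    simp_rw [inner_sum, inner_smul_left, inner_smul_right, mul_assoc]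
  have hdiag : ∀ n ∈ s, ∫ x, ∑ m ∈ s, starRingEnd 𝕜 (a n) * a m * inner 𝕜 (φ n x) (φ m x) ∂μ
      = ((‖a n‖ ^ 2 : ℝ) : 𝕜) := by
    intro n hn
    rw [integral_finsetSum _ (hint n hn)]
    simp_rw [integral_const_mul]
    rw [sum_congr rfl fun m hm => by rw [horth n m hn hm]]
    simp [hn, RCLike.conj_mul]
  simp_rw [hexpand]
  rw [integral_re (integrable_finsetSum _ fun n hn => integrable_finsetSum _ (hint n hn)),
    integral_finsetSum _ fun n hn => integrable_finsetSum _ (hint n hn), sum_congr rfl hdiag,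
    ← RCLike.ofReal_sum, RCLike.ofReal_re]

theorem integrable_sum_mul_norm_sum_smul_sq {ι : Type*} {T : Set κ}
    (hmem : ∀ n ∈ T, MemLp (φ n) 2 μ) (s : Finset ι) (c : ι → ℝ) {F : ι → Finset κ}
    (hF : ∀ i ∈ s, ∀ n ∈ F i, n ∈ T) :
    Integrable (fun x => ∑ i ∈ s, c i * ‖∑ n ∈ F i, a n • φ n x‖ ^ 2) μ :=
  integrable_finsetSum _ fun i hi =>
    ((memLp_finsetSum _ fun n hn => (hmem n (hF i hi n hn)).const_smul (a n)).integrable_norm_pow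
      two_ne_zero).const_mul _

theorem integral_sum_mul_norm_sum_smul_sq [DecidableEq κ] {ι : Type*} {T : Set κ}
    (hmem : ∀ n ∈ T, MemLp (φ n) 2 μ)
    (horth : ∀ n m, n ∈ T → m ∈ T → ∫ x, inner 𝕜 (φ n x) (φ m x) ∂μ = if n = m then 1 else 0)
    (s : Finset ι) (c : ι → ℝ) {F : ι → Finset κ} (hF : ∀ i ∈ s, ∀ n ∈ F i, n ∈ T) :
    ∫ x, ∑ i ∈ s, c i * ‖∑ n ∈ F i, a n • φ n x‖ ^ 2 ∂μ
      = ∑ i ∈ s, c i * ∑ n ∈ F i, ‖a n‖ ^ 2 := by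
  rw [integral_finsetSum _ fun i hi => ?_]
  · refine sum_congr rfl fun i hi => ?_
    rw [integral_const_mul, integral_norm_sum_smul_sq (fun n hn => hmem n (hF i hi n hn))
      fun n m hn hm => horth n m (hF i hi n hn) (hF i hi m hm)]
  · simpa using integrable_sum_mul_norm_sum_smul_sq hmem {i} c (by simpa using hF i hi)

end L2

theorem sum_Ioc_zero_le_tsum {f : ℕ → ℝ} (hf : ∀ n, 0 ≤ f (n + 1))
    (hs : Summable fun n => f (n + 1)) (N : ℕ) :
    ∑ n ∈ Ioc 0 N, f n ≤ ∑' n, f (n + 1) := by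
  rw [← Ico_add_one_add_one_eq_Ioc, ← sum_Ico_add', ← range_eq_Ico]
  exact hs.sum_le_tsum _ fun n _ => hf n

theorem lintegral_iSup_le_of_partialSups {X : Type*} [MeasurableSpace X] {μ : Measure X}
    {g : ℕ → X → ℝ≥0∞} (hg : ∀ m, AEMeasurable (g m) μ) {C : ℝ≥0∞}
    (h : ∀ M, ∫⁻ x, partialSups g M x ∂μ ≤ C) : ∫⁻ x, ⨆ m, g m x ∂μ ≤ C := by
  have hmeas : ∀ M, AEMeasurable (partialSups g M) μ := by
    intro M
    induction M with
    | zero => simpa using hg 0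
    | succ M ih => rw [partialSups_add_one]; exact ih.sup (hg _)
  have hsup : ∀ x, ⨆ m, g m x = ⨆ M, partialSups g M x := fun x => by
    rw [← iSup_apply, ← iSup_partialSups_eq, iSup_apply]
  simp_rw [hsup]
  rw [lintegral_iSup' hmeas (ae_of_all _ fun x _ _ h => partialSups_monotone g h x)]
  exact iSup_le h

section Majorant

variable {X : Type*} [MeasurableSpace X] {μ : Measure X} {𝕜 : Type*} [RCLike 𝕜]
  {H : Type*} [NormedAddCommGroup H] [InnerProductSpace 𝕜 H] {a : ℕ → 𝕜} {φ : ℕ → X → H} {L : ℝ}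

theorem lintegral_dyadicMajorant_le (hmem : ∀ n, 1 ≤ n → MemLp (φ n) 2 μ)
    (horth : ∀ n m, 1 ≤ n → 1 ≤ m →
      ∫ x, inner 𝕜 (φ n x) (φ m x) ∂μ = if n = m then (1 : 𝕜) else 0)
    (hL : ∀ N, ∑ n ∈ Ioc 0 N, ‖a n‖ ^ 2 * Real.logb 2 (n + 1) ^ 2 ≤ L) (N : ℕ) :
    ∫⁻ x, ENNReal.ofReal (dyadicMajorant N fun n => a n • φ n x) ∂μ
      ≤ ENNReal.ofReal (8 * L) := by
  have hshell : ∀ j ∈ range (Nat.log 2 N + 1), ∀ n ∈ dyadicShell j, n ∈ {n | 1 ≤ n} :=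
    fun _ _ _ hn => (Nat.zero_le _).trans_lt (mem_Ioc.1 hn).1
  have hcell : ∀ p ∈ range (Nat.log 2 N) ×ˢ Ico 2 (N + 1), ∀ n ∈ dyadicCell p.1 p.2,
      n ∈ {n | 1 ≤ n} :=
    fun _ _ _ hn => (Nat.zero_le _).trans_lt (mem_Ioc.1 hn).1
  have hP := integrable_sum_mul_norm_sum_smul_sq (a := a) hmem _ shellWeight hshell
  have hQ := integrable_sum_mul_norm_sum_smul_sq (a := a) hmem _ cellWeight hcell
  have hint := ofReal_integral_eq_lintegral_ofReal (hP.add hQ)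
    (ae_of_all _ fun x => dyadicMajorant_nonneg N fun n => a n • φ n x)
  simp only [Pi.add_apply] at hint
  simp only [dyadicMajorant]
  rw [← hint, integral_add hP hQ, integral_sum_mul_norm_sum_smul_sq hmem horth _ _ hshell,
    integral_sum_mul_norm_sum_smul_sq hmem horth _ _ hcell]
  have hb : ∀ n, 0 ≤ ‖a n‖ ^ 2 := fun n => sq_nonneg _
  refine ENNReal.ofReal_le_ofReal ?_
  linarith [sum_shellWeight_mul_le hb (Nat.log 2 N), sum_cellWeight_mul_le hb (Nat.log 2 N) N,
    hL (2 ^ Nat.log 2 N), hL ((N + 1) * 2 ^ Nat.log 2 N)]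

theorem lintegral_iSup_norm_sum_sq_le (hmem : ∀ n, 1 ≤ n → MemLp (φ n) 2 μ)
    (horth : ∀ n m, 1 ≤ n → 1 ≤ m →
      ∫ x, inner 𝕜 (φ n x) (φ m x) ∂μ = if n = m then (1 : 𝕜) else 0)
    (hL : ∀ N, ∑ n ∈ Ioc 0 N, ‖a n‖ ^ 2 * Real.logb 2 (n + 1) ^ 2 ≤ L) :
    ∫⁻ x, ⨆ m : ℕ, ‖∑ n ∈ Ioc 0 (m + 1), a n • φ n x‖ₑ ^ 2 ∂μ ≤ ENNReal.ofReal (16 * L) := by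
  refine lintegral_iSup_le_of_partialSups (fun m => ?_) fun M => ?_
  · exact ((memLp_finsetSum _ fun n hn => (hmem n (mem_Ioc.1 hn).1).const_smul (a n)
      ).aestronglyMeasurable.enorm.pow_const 2)
  set S := fun m x => ‖∑ n ∈ Ioc 0 (m + 1), a n • φ n x‖ₑ ^ 2
  set D := fun x => ENNReal.ofReal (dyadicMajorant (M + 1) fun n => a n • φ n x)
  have hdom : partialSups S M ≤ fun x => 2 * D x := by
    refine partialSups_le _ M _ fun m hm x => ?_
    simp only [S, D]
    rw [← ofReal_norm, ← ENNReal.ofReal_pow (norm_nonneg _), ← ENNReal.ofReal_ofNat 2,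
      ← ENNReal.ofReal_mul zero_le_two]
    exact ENNReal.ofReal_le_ofReal
      (norm_sum_Ioc_sq_le_dyadicMajorant _ m.succ_ne_zero (by simpa using hm))
  calc ∫⁻ x, partialSups S M x ∂μ ≤ ∫⁻ x, 2 * D x ∂μ := lintegral_mono hdom
    _ = 2 * ∫⁻ x, D x ∂μ := lintegral_const_mul' _ _ ENNReal.ofNat_ne_top
    _ ≤ 2 * ENNReal.ofReal (8 * L) := by
        gcongr
        exact lintegral_dyadicMajorant_le hmem horth hL _
    _ = ENNReal.ofReal (16 * L) := by
        rw [← ENNReal.ofReal_ofNat 2, ← ENNReal.ofReal_mul zero_le_two]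
        ring_nf

end Majorant

end MenshovRademacher

open MenshovRademacher

theorem menshov_rademacher_majorant_bound_general
    {X : Type*} [MeasurableSpace X] (μ : Measure X)
    {𝕜 : Type*} [RCLike 𝕜]
    {H : Type*} [NormedAddCommGroup H] [InnerProductSpace 𝕜 H]
    (a : ℕ → 𝕜) (φ : ℕ → X → H)
    (hmem : ∀ n, 1 ≤ n → MemLp (φ n) 2 μ)
    (horth : ∀ n m, 1 ≤ n → 1 ≤ m →
      ∫ x, (inner 𝕜 (φ n x) (φ m x) : 𝕜) ∂μ = if n = m then (1 : 𝕜) else 0)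
    (hL : Summable fun n : ℕ => ‖a (n + 1)‖ ^ 2 * (Real.logb 2 ((n : ℝ) + 2)) ^ 2) :
    (∫⁻ x, (⨆ m : ℕ, (‖∑ n ∈ Finset.Icc 1 (m + 1), a n • φ n x‖₊ : ℝ≥0∞)) ^ 2 ∂μ) ^ (1 / 2 : ℝ)
      ≤ ENNReal.ofReal
          (4 * Real.sqrt (∑' n : ℕ, ‖a (n + 1)‖ ^ 2 * (Real.logb 2 ((n : ℝ) + 2)) ^ 2)) := by
  set L := ∑' n : ℕ, ‖a (n + 1)‖ ^ 2 * (Real.logb 2 ((n : ℝ) + 2)) ^ 2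
  have hshift : ∀ n : ℕ, Real.logb 2 ((n + 1 : ℕ) + 1) = Real.logb 2 ((n : ℝ) + 2) := fun n => by
    push_cast
    ring_nf
  have hpartial (N : ℕ) : ∑ n ∈ Ioc 0 N, ‖a n‖ ^ 2 * Real.logb 2 (n + 1) ^ 2 ≤ L := by
    refine (sum_Ioc_zero_le_tsum (fun n => by positivity) ?_ N).trans_eq ?_
    · simpa only [hshift] using hL
    · simp only [hshift, L]
  have hsq : ∫⁻ x, (⨆ m : ℕ, (‖∑ n ∈ Finset.Icc 1 (m + 1), a n • φ n x‖₊ : ℝ≥0∞)) ^ 2 ∂μ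
      ≤ ENNReal.ofReal (16 * L) := by
    simp_rw [ENNReal.iSup_pow]
    -- `Icc 1 (m + 1)` and `Ioc 0 (m + 1)` are definitionally equal on `ℕ`.
    exact lintegral_iSup_norm_sum_sq_le hmem horth hpartial
  calc _ ≤ ENNReal.ofReal (16 * L) ^ (1 / 2 : ℝ) := ENNReal.rpow_le_rpow hsq (by norm_num)
    _ = ENNReal.ofReal (4 * Real.sqrt L) := by
      rw [ENNReal.ofReal_rpow_of_nonneg (by positivity) (by norm_num), ← Real.sqrt_eq_rpow,
        Real.sqrt_mul (by norm_num), show Real.sqrt 16 = 4 by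
          rw [show (16 : ℝ) = 4 ^ 2 by norm_num, Real.sqrt_sq (by norm_num)]]

/-- General Menshov–Rademacher theorem: bound on the majorant of partial sums. -/
theorem menshov_rademacher_majorant_bound
    {X : Type*} [MeasurableSpace X] (μ : Measure X)
    {𝕜 : Type*} [RCLike 𝕜]
    {H : Type*} [NormedAddCommGroup H] [InnerProductSpace 𝕜 H] [CompleteSpace H]
    (a : ℕ → 𝕜) (φ : ℕ → X → H)
    (hmem : ∀ n, 1 ≤ n → MemLp (φ n) 2 μ)
    (horth : ∀ n m, 1 ≤ n → 1 ≤ m →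
      ∫ x, (inner 𝕜 (φ n x) (φ m x) : 𝕜) ∂μ = if n = m then (1 : 𝕜) else 0)
    (hL : Summable fun n : ℕ => ‖a (n + 1)‖ ^ 2 * (Real.logb 2 ((n : ℝ) + 2)) ^ 2) :
    (∫⁻ x, (⨆ m : ℕ, (‖∑ n ∈ Finset.Icc 1 (m + 1), a n • φ n x‖₊ : ℝ≥0∞)) ^ 2 ∂μ) ^ (1 / 2 : ℝ)
      ≤ ENNReal.ofReal
          (4 * Real.sqrt (∑' n : ℕ, ‖a (n + 1)‖ ^ 2 * (Real.logb 2 ((n : ℝ) + 2)) ^ 2)) :=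
  menshov_rademacher_majorant_bound_general μ a φ hmem horth hL
end

section
/- Let (a_n)_{n=1}^∞ be a sequence of scalars satisfying Σ_{k=0}^∞ ( Σ_{n=ν_k+1}^{ν_{k+1}} |a_n|² (log₂ n)² )^{1/2} < ∞, where ν_k := 2^{2^k}. Then for every orthonormal system (φ_n)_{n=1}^∞ in L₂(X, dμ; H) the series Σ_{n=1}^∞ a_n φ_n(x) converges unconditionally μ-almost everywhere on X; that is, for every permutation σ of ℕ, the series Σ_{n=1}^∞ a_{σ(n)} φ_{σ(n)}(x) converges in the norm of H for μ-almost every x ∈ X (the exceptional null set may depend on σ). -/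
/-!
Cut the indices into the blocks `(2^2^k, 2^2^(k+1)]`. Block `k` has at most `2^L` elements,
`L = 2^(k+1)`; rank them in the order in which the permutation visits them. A partial sum of the
rearranged block is then a sum over an initial segment of ranks, which splits into at most one
dyadic rank interval `I_{l,q} = [q 2^l, (q + 1) 2^l)` per level `l ≤ L`, so all of these partial
sums are bounded by the Menshov–Rademacher majorant
`W_k = ∑_{l ≤ L} (∑_q ‖∑_{rank n ∈ I_{l,q}} a_n φ_n‖²)^{1/2}`.
By orthogonality `‖W_k‖₂ ≤ (L + 1) (∑_{block k} |a_n|²)^{1/2} ≤ 3 (∑_{block k} |a_n|² log₂² n)^{1/2}`,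
as `log₂ n ≥ 2^k` on the block. The hypothesis makes these norms summable, hence
`∑_k W_k(x) < ∞` almost everywhere. At such `x`, a late stretch of the rearranged series meets only
late blocks, each in a window of positions, so its norm is at most twice a tail of `∑_k W_k(x)`.
-/

open MeasureTheory Filter Finset
open scoped ComplexConjugate ENNReal

namespace Tandori

section Chaining

variable {E : Type*} [SeminormedAddCommGroup E]

lemma sum_range_mul_eq_sum_sum_Ico (u : ℕ → E) (n b : ℕ) :
    ∑ i ∈ range (b * n), u i = ∑ q ∈ range b, ∑ i ∈ Ico (q * n) ((q + 1) * n), u i := by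
  induction b with
  | zero => simp
  | succ b ih =>
    rw [sum_range_succ, ← ih, sum_range_add_sum_Ico _ (Nat.mul_le_mul_right n b.le_succ)]

lemma sum_Ico_mul_eq_sum_sum_Ico (u : ℕ → E) (n : ℕ) {a b : ℕ} (hab : a ≤ b) :
    ∑ i ∈ Ico (a * n) (b * n), u i = ∑ q ∈ Ico a b, ∑ i ∈ Ico (q * n) ((q + 1) * n), u i := by
  rw [sum_Ico_eq_sub _ (Nat.mul_le_mul_right n hab), sum_Ico_eq_sub _ hab,
    sum_range_mul_eq_sum_sum_Ico, sum_range_mul_eq_sum_sum_Ico]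

lemma norm_sum_le_sqrt_sum_sq {ι : Type*} {J I : Finset ι} (hJI : J ⊆ I) (hJ : #J ≤ 1)
    (b : ι → E) : ‖∑ q ∈ J, b q‖ ≤ √(∑ q ∈ I, ‖b q‖ ^ 2) := by
  refine Real.le_sqrt_of_sq_le ?_
  calc ‖∑ q ∈ J, b q‖ ^ 2 ≤ (∑ q ∈ J, ‖b q‖) ^ 2 := by gcongr; exact norm_sum_le _ _
    _ ≤ #J * ∑ q ∈ J, ‖b q‖ ^ 2 := sq_sum_le_card_mul_sum_sq
    _ ≤ 1 * ∑ q ∈ J, ‖b q‖ ^ 2 := by gcongr; exact_mod_cast hJ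
    _ ≤ ∑ q ∈ I, ‖b q‖ ^ 2 := by
      rw [one_mul]; exact sum_le_sum_of_subset_of_nonneg hJI fun _ _ _ => by positivity

/-- The Menshov–Rademacher chaining bound: writing `t` in binary, the initial segment `[0, t)`
splits into at most one dyadic interval `[q 2^l, (q + 1) 2^l)` of each length `2^l`. -/
theorem norm_sum_range_le_sum_sqrt_dyadic (u : ℕ → E) {L t : ℕ} (ht : t ≤ 2 ^ L) :
    ‖∑ i ∈ range t, u i‖ ≤ ∑ l ∈ range (L + 1),
      √(∑ q ∈ range (2 ^ L), ‖∑ i ∈ Ico (q * 2 ^ l) ((q + 1) * 2 ^ l), u i‖ ^ 2) := by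
  set P : ℕ → E := fun c => ∑ i ∈ range c, u i
  set c : ℕ → ℕ := fun l => t / 2 ^ l * 2 ^ l
  have hc_succ (l : ℕ) : c (l + 1) = t / 2 ^ (l + 1) * 2 * 2 ^ l := by
    simp only [c]; ring
  have hdigit (l : ℕ) : t / 2 ^ (l + 1) * 2 ≤ t / 2 ^ l ∧ t / 2 ^ l ≤ t / 2 ^ (l + 1) * 2 + 1 := by
    rw [pow_succ, ← Nat.div_div_eq_div_mul]; omega
  have hstep (l : ℕ) : P (c l) - P (c (l + 1)) =
      ∑ q ∈ Ico (t / 2 ^ (l + 1) * 2) (t / 2 ^ l), ∑ i ∈ Ico (q * 2 ^ l) ((q + 1) * 2 ^ l), u i := by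
    rw [← sum_Ico_mul_eq_sum_sum_Ico _ _ (hdigit l).1, hc_succ,
      sum_Ico_eq_sub _ (Nat.mul_le_mul_right _ (hdigit l).1)]
  have htop : c (L + 1) = 0 := by
    simp only [c, Nat.div_eq_of_lt (ht.trans_lt (Nat.pow_lt_pow_succ one_lt_two)), zero_mul]
  have htel : P t = ∑ l ∈ range (L + 1), (P (c l) - P (c (l + 1))) := by
    rw [sum_range_sub', htop]; simp [P, c]
  change ‖P t‖ ≤ _
  rw [htel]
  refine (norm_sum_le _ _).trans (sum_le_sum fun l _ => ?_)
  rw [hstep]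
  refine norm_sum_le_sqrt_sum_sq (fun q hq => ?_) ?_ _
  · rw [mem_Ico] at hq
    rw [mem_range]
    exact hq.2.trans_le ((Nat.div_le_self _ _).trans ht)
  · rw [Nat.card_Ico]; have := hdigit l; omega

end Chaining

section Rank

variable {ι E : Type*} [SeminormedAddCommGroup E]

def rank (s : Finset ι) (τ : ι → ℕ) (n : ι) : ℕ := #{n' ∈ s | τ n' < τ n}

lemma filter_le_eq_filter_rank_lt (s : Finset ι) (τ : ι → ℕ) (m : ℕ) :
    {n ∈ s | τ n ≤ m} = {n ∈ s | rank s τ n < #{n ∈ s | τ n ≤ m}} := by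
  ext n
  simp only [mem_filter, and_congr_right_iff]
  intro hn
  constructor
  · intro hnm
    refine card_lt_card ⟨fun n' hn' => ?_, fun h => ?_⟩
    · rw [mem_filter] at hn' ⊢; exact ⟨hn'.1, by omega⟩
    · simpa using h (mem_filter.2 ⟨hn, hnm⟩)
  · intro h
    by_contra! hmn
    refine h.not_ge (card_le_card fun n' hn' => ?_)
    rw [mem_filter] at hn' ⊢; exact ⟨hn'.1, by omega⟩

noncomputable def dyadicSquareFunction (s : Finset ι) (τ : ι → ℕ) (L l : ℕ) (v : ι → E) : ℝ :=
  √(∑ q ∈ range (2 ^ L), ‖∑ n ∈ s with rank s τ n ∈ Ico (q * 2 ^ l) ((q + 1) * 2 ^ l), v n‖ ^ 2)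

noncomputable def dyadicMajorant (s : Finset ι) (τ : ι → ℕ) (L : ℕ) (v : ι → E) : ℝ :=
  ∑ l ∈ range (L + 1), dyadicSquareFunction s τ L l v

theorem norm_sum_filter_le_dyadicMajorant {s : Finset ι} {L : ℕ} (hs : #s ≤ 2 ^ L)
    (τ : ι → ℕ) (v : ι → E) (m : ℕ) :
    ‖∑ n ∈ s with τ n ≤ m, v n‖ ≤ dyadicMajorant s τ L v := by
  have hfiber (J : Finset ℕ) :
      ∑ n ∈ s with rank s τ n ∈ J, v n = ∑ i ∈ J, ∑ n ∈ s with rank s τ n = i, v n :=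
    (sum_fiberwise_eq_sum_filter _ _ _ _).symm
  have hprefix : ∑ n ∈ s with τ n ≤ m, v n =
      ∑ n ∈ s with rank s τ n ∈ range #{n ∈ s | τ n ≤ m}, v n := by
    conv_lhs => rw [filter_le_eq_filter_rank_lt]
    simp only [mem_range]
  rw [hprefix, hfiber]
  refine (norm_sum_range_le_sum_sqrt_dyadic _
    ((card_le_card (filter_subset _ s)).trans hs)).trans_eq ?_
  simp only [dyadicMajorant, dyadicSquareFunction, hfiber]

theorem norm_sum_filter_Ioc_le_dyadicMajorant {s : Finset ι} {L : ℕ} (hs : #s ≤ 2 ^ L)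
    (τ : ι → ℕ) (v : ι → E) (m m' : ℕ) :
    ‖∑ n ∈ s with τ n ∈ Ioc m m', v n‖ ≤ 2 * dyadicMajorant s τ L v := by
  have hsplit : ∑ n ∈ s with τ n ∈ Ioc m m', v n =
      ∑ n ∈ s with τ n ≤ m', v n - ∑ n ∈ s with τ n ≤ min m m', v n := by
    classical
    rw [eq_sub_iff_add_eq, ← sum_union (disjoint_filter.2 fun n _ h₁ h₂ => by
      rw [mem_Ioc] at h₁; rw [le_min_iff] at h₂; omega)]
    rw [← filter_or]
    exact sum_congr (filter_congr fun n _ => by rw [mem_Ioc, le_min_iff]; omega) fun _ _ => rfl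
  rw [hsplit, two_mul]
  exact (norm_sub_le _ _).trans (add_le_add (norm_sum_filter_le_dyadicMajorant hs τ v _)
    (norm_sum_filter_le_dyadicMajorant hs τ v _))

end Rank

section L2Bounds

variable {X ι κ : Type*} [MeasurableSpace X] {μ : Measure X} {𝕜 : Type*} [RCLike 𝕜]
  {H : Type*} [NormedAddCommGroup H] [InnerProductSpace 𝕜 H]

lemma ae_summable_norm_of_eLpNorm_le {E : Type*} [NormedAddCommGroup E] {p : ℝ≥0∞}
    (hp : 1 ≤ p) {f : ℕ → X → E} (hf : ∀ k, AEStronglyMeasurable (f k) μ) {B : ℕ → ℝ}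
    (hB : Summable B) (hB_nonneg : ∀ k, 0 ≤ B k)
    (hfB : ∀ k, eLpNorm (f k) p μ ≤ ENNReal.ofReal (B k)) :
    ∀ᵐ x ∂μ, Summable fun k => ‖f k x‖ := by
  refine summable_norm_of_tsum_eLpNorm_ne_top hp hf
    (ne_top_of_le_ne_top ?_ (ENNReal.tsum_le_tsum hfB))
  rw [← ENNReal.ofReal_tsum_of_nonneg hB_nonneg hB]
  exact ENNReal.ofReal_ne_top

lemma integrable_inner_of_memLp {f g : X → H} (hf : MemLp f 2 μ) (hg : MemLp g 2 μ) :
    Integrable (fun x => inner 𝕜 (f x) (g x)) μ :=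
  (L2.integrable_inner (hf.toLp f) (hg.toLp g)).congr <| by
    filter_upwards [hf.coeFn_toLp, hg.coeFn_toLp] with x hfx hgx
    rw [hfx, hgx]

lemma integral_norm_sum_smul_sq [DecidableEq ι] {s : Finset ι} {φ : ι → X → H}
    (hmem : ∀ n ∈ s, MemLp (φ n) 2 μ)
    (horth : ∀ n ∈ s, ∀ m ∈ s, ∫ x, inner 𝕜 (φ n x) (φ m x) ∂μ = if n = m then 1 else 0)
    (a : ι → 𝕜) :
    ∫ x, ‖∑ n ∈ s, a n • φ n x‖ ^ 2 ∂μ = ∑ n ∈ s, ‖a n‖ ^ 2 := by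
  have hint (n : ι) (hn : n ∈ s) (m : ι) (hm : m ∈ s) :
      Integrable (fun x => conj (a n) * a m * inner 𝕜 (φ n x) (φ m x)) μ :=
    (integrable_inner_of_memLp (hmem n hn) (hmem m hm)).const_mul _
  have hexpand (x : X) : inner 𝕜 (∑ n ∈ s, a n • φ n x) (∑ n ∈ s, a n • φ n x) =
      ∑ n ∈ s, ∑ m ∈ s, conj (a n) * a m * inner 𝕜 (φ n x) (φ m x) := by
    rw [sum_inner]
    refine sum_congr rfl fun n _ => ?_
    rw [inner_sum]
    refine sum_congr rfl fun m _ => ?_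
    rw [inner_smul_left, inner_smul_right, mul_assoc]
  calc ∫ x, ‖∑ n ∈ s, a n • φ n x‖ ^ 2 ∂μ
      = ∫ x, RCLike.re (inner 𝕜 (∑ n ∈ s, a n • φ n x) (∑ n ∈ s, a n • φ n x)) ∂μ := by
        simp only [inner_self_eq_norm_sq]
    _ = RCLike.re (∑ n ∈ s, ∑ m ∈ s, conj (a n) * a m * ∫ x, inner 𝕜 (φ n x) (φ m x) ∂μ) := by
        simp_rw [hexpand]
        rw [integral_re (integrable_finsetSum _ fun n hn =>
          integrable_finsetSum _ fun m hm => hint n hn m hm),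
          integral_finsetSum _ fun n hn => integrable_finsetSum _ fun m hm => hint n hn m hm]
        congr 1
        refine sum_congr rfl fun n hn => ?_
        rw [integral_finsetSum _ fun m hm => hint n hn m hm]
        exact sum_congr rfl fun m _ => integral_const_mul _ _
    _ = ∑ n ∈ s, ‖a n‖ ^ 2 := by
        rw [map_sum]
        refine sum_congr rfl fun n hn => ?_
        rw [sum_congr rfl fun m hm => congrArg (conj (a n) * a m * ·) (horth n hn m hm)]
        simp [hn, RCLike.conj_mul]

lemma eLpNorm_sqrt_sum_norm_sq_le [DecidableEq ι] {s : Finset ι} {φ : ι → X → H}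
    (hmem : ∀ n ∈ s, MemLp (φ n) 2 μ)
    (horth : ∀ n ∈ s, ∀ m ∈ s, ∫ x, inner 𝕜 (φ n x) (φ m x) ∂μ = if n = m then 1 else 0)
    (a : ι → 𝕜) {T : Finset κ} {D : κ → Finset ι} (hD : ∀ q ∈ T, D q ⊆ s)
    (hdisj : (T : Set κ).PairwiseDisjoint D) :
    eLpNorm (fun x => √(∑ q ∈ T, ‖∑ n ∈ D q, a n • φ n x‖ ^ 2)) 2 μ ≤
      ENNReal.ofReal √(∑ n ∈ s, ‖a n‖ ^ 2) := by
  have hsq (q : κ) (hq : q ∈ T) : Integrable (fun x => ‖∑ n ∈ D q, a n • φ n x‖ ^ 2) μ := by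
    exact (memLp_finsetSum _ fun n hn =>
      (hmem n (hD q hq hn)).const_smul (a n)).integrable_norm_pow two_ne_zero
  have hint : Integrable (fun x => ∑ q ∈ T, ‖∑ n ∈ D q, a n • φ n x‖ ^ 2) μ :=
    integrable_finsetSum _ hsq
  have hmemLp : MemLp (fun x => √(∑ q ∈ T, ‖∑ n ∈ D q, a n • φ n x‖ ^ 2)) 2 μ := by
    refine (memLp_two_iff_integrable_sq_norm
      (Real.continuous_sqrt.comp_aestronglyMeasurable hint.aestronglyMeasurable)).2
      (hint.congr (ae_of_all _ fun x => ?_))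
    simp only [Real.norm_eq_abs, sq_abs]
    rw [Real.sq_sqrt (sum_nonneg fun _ _ => by positivity)]
  have hG : ∫ x, ‖√(∑ q ∈ T, ‖∑ n ∈ D q, a n • φ n x‖ ^ 2)‖ ^ (2 : ℝ) ∂μ =
      ∑ q ∈ T, ∑ n ∈ D q, ‖a n‖ ^ 2 := by
    simp only [Real.rpow_two, Real.norm_eq_abs, sq_abs,
      Real.sq_sqrt (sum_nonneg fun _ _ => sq_nonneg _)]
    rw [integral_finsetSum _ hsq]
    exact sum_congr rfl fun q hq => integral_norm_sum_smul_sq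
      (fun n hn => hmem n (hD q hq hn)) (fun n hn m hm => horth n (hD q hq hn) m (hD q hq hm)) a
  have hbound : ∑ q ∈ T, ∑ n ∈ D q, ‖a n‖ ^ 2 ≤ ∑ n ∈ s, ‖a n‖ ^ 2 := by
    rw [← sum_biUnion hdisj]
    exact sum_le_sum_of_subset_of_nonneg (biUnion_subset.2 hD) fun _ _ _ => sq_nonneg _
  rw [hmemLp.eLpNorm_eq_integral_rpow_norm two_ne_zero ENNReal.ofNat_ne_top,
    ENNReal.toReal_ofNat, hG, ← one_div, ← Real.sqrt_eq_rpow]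
  exact ENNReal.ofReal_le_ofReal (Real.sqrt_le_sqrt hbound)

lemma aestronglyMeasurable_dyadicSquareFunction {E : Type*} [NormedAddCommGroup E]
    {s : Finset ι} {v : ι → X → E} (hv : ∀ n ∈ s, AEStronglyMeasurable (v n) μ)
    (τ : ι → ℕ) (L l : ℕ) :
    AEStronglyMeasurable (fun x => dyadicSquareFunction s τ L l (v · x)) μ :=
  Real.continuous_sqrt.comp_aestronglyMeasurable <|
    Finset.aestronglyMeasurable_fun_sum _ fun _ _ =>
      ((Finset.aestronglyMeasurable_fun_sum _ fun n hn =>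
        hv n (mem_filter.1 hn).1).norm.pow 2)

lemma aestronglyMeasurable_dyadicMajorant {E : Type*} [NormedAddCommGroup E]
    {s : Finset ι} {v : ι → X → E} (hv : ∀ n ∈ s, AEStronglyMeasurable (v n) μ)
    (τ : ι → ℕ) (L : ℕ) :
    AEStronglyMeasurable (fun x => dyadicMajorant s τ L (v · x)) μ :=
  Finset.aestronglyMeasurable_fun_sum _ fun l _ =>
    aestronglyMeasurable_dyadicSquareFunction hv τ L l

theorem eLpNorm_dyadicMajorant_le [DecidableEq ι] {s : Finset ι} {φ : ι → X → H}
    (hmem : ∀ n ∈ s, MemLp (φ n) 2 μ)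
    (horth : ∀ n ∈ s, ∀ m ∈ s, ∫ x, inner 𝕜 (φ n x) (φ m x) ∂μ = if n = m then 1 else 0)
    (a : ι → 𝕜) (τ : ι → ℕ) (L : ℕ) :
    eLpNorm (fun x => dyadicMajorant s τ L (fun n => a n • φ n x)) 2 μ ≤
      ENNReal.ofReal ((L + 1) * √(∑ n ∈ s, ‖a n‖ ^ 2)) := by
  have hmeas : ∀ n ∈ s, AEStronglyMeasurable (fun x => a n • φ n x) μ :=
    fun n hn => (hmem n hn).1.const_smul (a n)
  have hdisj (l : ℕ) : ((range (2 ^ L) : Finset ℕ) : Set ℕ).PairwiseDisjoint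
      fun q => {n ∈ s | rank s τ n ∈ Ico (q * 2 ^ l) ((q + 1) * 2 ^ l)} := by
    intro q _ q' _ hqq'
    refine disjoint_filter.2 fun n _ hq hq' => hqq' ?_
    rw [mem_Ico] at hq hq'
    rw [← Nat.div_eq_of_lt_le hq.1 hq.2, ← Nat.div_eq_of_lt_le hq'.1 hq'.2]
  have hlevel (l : ℕ) :
      eLpNorm (fun x => dyadicSquareFunction s τ L l (fun n => a n • φ n x)) 2 μ ≤
        ENNReal.ofReal √(∑ n ∈ s, ‖a n‖ ^ 2) :=
    eLpNorm_sqrt_sum_norm_sq_le hmem horth a (fun _ _ => filter_subset _ _) (hdisj l)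
  calc eLpNorm (fun x => dyadicMajorant s τ L (fun n => a n • φ n x)) 2 μ
      ≤ ∑ l ∈ range (L + 1),
          eLpNorm (fun x => dyadicSquareFunction s τ L l (fun n => a n • φ n x)) 2 μ := by
        simp only [dyadicMajorant, ← sum_fn]
        exact eLpNorm_sum_le (fun l _ => aestronglyMeasurable_dyadicSquareFunction hmeas τ L l)
          one_le_two
    _ ≤ ENNReal.ofReal ((L + 1) * √(∑ n ∈ s, ‖a n‖ ^ 2)) := by
        refine (sum_le_sum fun l _ => hlevel l).trans_eq ?_
        rw [sum_const, card_range, nsmul_eq_mul, ENNReal.ofReal_mul (by positivity)]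
        norm_cast

end L2Bounds

section Blocks

def block (k : ℕ) : Finset ℕ := Icc (2 ^ 2 ^ k + 1) (2 ^ 2 ^ (k + 1))

/-- The `k` with `n ∈ block k`, for `2 < n`. -/
def blockIndex (n : ℕ) : ℕ := Nat.clog 2 (Nat.clog 2 n) - 1

lemma two_pow_two_pow_lt_iff {k n : ℕ} : 2 ^ 2 ^ k < n ↔ k < Nat.clog 2 (Nat.clog 2 n) := by
  rw [Nat.lt_clog_iff_pow_lt one_lt_two, Nat.lt_clog_iff_pow_lt one_lt_two]

lemma le_two_pow_two_pow_iff {k n : ℕ} : n ≤ 2 ^ 2 ^ k ↔ Nat.clog 2 (Nat.clog 2 n) ≤ k := by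
  rw [Nat.clog_le_iff_le_pow one_lt_two, Nat.clog_le_iff_le_pow one_lt_two]

lemma mem_block_iff {n : ℕ} (hn : 2 < n) (k : ℕ) : n ∈ block k ↔ blockIndex n = k := by
  have := two_pow_two_pow_lt_iff.1 (show 2 ^ 2 ^ 0 < n from hn)
  rw [block, mem_Icc, Nat.add_one_le_iff, two_pow_two_pow_lt_iff, le_two_pow_two_pow_iff,
    blockIndex]
  omega

lemma le_blockIndex {K n : ℕ} (h : 2 ^ 2 ^ K < n) : K ≤ blockIndex n := by
  have := two_pow_two_pow_lt_iff.1 h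
  rw [blockIndex]
  omega

lemma card_block_le (k : ℕ) : #(block k) ≤ 2 ^ 2 ^ (k + 1) := by
  rw [block, Nat.card_Icc, Nat.add_sub_add_right]
  exact Nat.sub_le _ _

lemma two_pow_two_pow_lt_of_mem_block {n k : ℕ} (hn : n ∈ block k) : 2 ^ 2 ^ k < n :=
  Nat.add_one_le_iff.1 (mem_Icc.1 hn).1

lemma one_le_of_mem_block {n k : ℕ} (hn : n ∈ block k) : 1 ≤ n :=
  Nat.one_le_two_pow.trans (two_pow_two_pow_lt_of_mem_block hn).le

lemma two_pow_le_logb_of_mem_block {n k : ℕ} (hn : n ∈ block k) :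
    (2 : ℝ) ^ k ≤ Real.logb 2 n := by
  have h := (two_pow_two_pow_lt_of_mem_block hn).le
  calc (2 : ℝ) ^ k = Real.logb 2 ((2 : ℝ) ^ 2 ^ k) := by
        rw [Real.logb_pow, Real.logb_self_eq_one one_lt_two, mul_one]; push_cast; ring
    _ ≤ Real.logb 2 n := Real.logb_le_logb_of_le one_lt_two (by positivity) (by exact_mod_cast h)

lemma two_pow_mul_sqrt_sum_le {𝕜 : Type*} [RCLike 𝕜] (a : ℕ → 𝕜) (k : ℕ) :
    2 ^ k * √(∑ n ∈ block k, ‖a n‖ ^ 2) ≤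
      √(∑ n ∈ block k, ‖a n‖ ^ 2 * Real.logb 2 n ^ 2) := by
  rw [← Real.sqrt_sq (by positivity : (0 : ℝ) ≤ 2 ^ k), ← Real.sqrt_mul (by positivity), mul_sum]
  refine Real.sqrt_le_sqrt (sum_le_sum fun n hn => ?_)
  rw [mul_comm]
  gcongr
  exact two_pow_le_logb_of_mem_block hn

lemma sum_Ioc_perm_eq_sum_block {E : Type*} [AddCommMonoid E] (σ : Equiv.Perm ℕ) (v : ℕ → E)
    {m m' : ℕ} (h : ∀ i ∈ Ioc m m', 2 < σ i) :
    ∑ i ∈ Ioc m m', v (σ i) = ∑ k ∈ (Ioc m m').image (blockIndex ∘ σ),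
      ∑ n ∈ block k with σ.symm n ∈ Ioc m m', v n := by
  rw [← sum_fiberwise_of_maps_to fun i hi => mem_image_of_mem (blockIndex ∘ σ) hi]
  refine sum_congr rfl fun k _ => sum_equiv σ (fun i => ?_) fun _ _ => rfl
  simp only [mem_filter, Function.comp_apply, Equiv.symm_apply_apply]
  exact ⟨fun ⟨hi, hk⟩ => ⟨(mem_block_iff (h i hi) k).2 hk, hi⟩,
    fun ⟨hk, hi⟩ => ⟨hi, (mem_block_iff (h i hi) k).1 hk⟩⟩

theorem eLpNorm_dyadicMajorant_block_le {X : Type*} [MeasurableSpace X] {μ : Measure X}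
    {𝕜 : Type*} [RCLike 𝕜] {H : Type*} [NormedAddCommGroup H] [InnerProductSpace 𝕜 H]
    {φ : ℕ → X → H} {k : ℕ} (hmem : ∀ n ∈ block k, MemLp (φ n) 2 μ)
    (horth : ∀ n ∈ block k, ∀ m ∈ block k,
      ∫ x, inner 𝕜 (φ n x) (φ m x) ∂μ = if n = m then 1 else 0)
    (a : ℕ → 𝕜) (τ : ℕ → ℕ) :
    eLpNorm (fun x => dyadicMajorant (block k) τ (2 ^ (k + 1)) fun n => a n • φ n x) 2 μ ≤
      ENNReal.ofReal (3 * √(∑ n ∈ block k, ‖a n‖ ^ 2 * Real.logb 2 n ^ 2)) := by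
  refine (eLpNorm_dyadicMajorant_le hmem horth a τ _).trans (ENNReal.ofReal_le_ofReal ?_)
  have hlevels : ((2 ^ (k + 1) : ℕ) : ℝ) + 1 ≤ 3 * 2 ^ k := by
    push_cast
    rw [pow_succ]
    linarith [one_le_pow₀ (M₀ := ℝ) (n := k) one_le_two]
  nlinarith [two_pow_mul_sqrt_sum_le a k, Real.sqrt_nonneg (∑ n ∈ block k, ‖a n‖ ^ 2)]

theorem cauchySeq_sum_perm_of_block_bound {E : Type*} [SeminormedAddCommGroup E]
    (σ : Equiv.Perm ℕ) (v : ℕ → E) {W : ℕ → ℝ} (hW : Summable W)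
    (hbound : ∀ k m m', ‖∑ n ∈ block k with σ.symm n ∈ Ioc m m', v n‖ ≤ W k) :
    CauchySeq fun m => ∑ i ∈ Icc 1 m, v (σ i) := by
  rw [Metric.cauchySeq_iff']
  intro ε hε
  obtain ⟨s, hs⟩ := summable_iff_vanishing_norm.1 hW ε hε
  obtain ⟨K, hK⟩ := s.exists_nat_subset_range
  obtain ⟨M, hM⟩ := eventually_atTop.1
    (σ.injective.nat_tendsto_atTop.eventually_gt_atTop (2 ^ 2 ^ K))
  refine ⟨M, fun m hm => ?_⟩
  have hlarge (i : ℕ) (hi : i ∈ Ioc M m) : 2 ^ 2 ^ K < σ i := hM i (mem_Ioc.1 hi).1.le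
  set t := (Ioc M m).image (blockIndex ∘ σ)
  have hts : Disjoint t s := by
    refine disjoint_left.2 fun k hk hks => ?_
    obtain ⟨i, hi, rfl⟩ := mem_image.1 hk
    exact (mem_range.1 (hK hks)).not_ge (le_blockIndex (hlarge i hi))
  have hIcc (n : ℕ) : Icc 1 n = Ioc 0 n := Icc_add_one_left_eq_Ioc 0 n
  rw [dist_eq_norm, hIcc, hIcc,
    ← sum_Ioc_consecutive _ (Nat.zero_le M) hm, add_sub_cancel_left,
    sum_Ioc_perm_eq_sum_block σ v fun i hi =>
      (Nat.le_self_pow (pow_ne_zero K two_ne_zero) 2).trans_lt (hlarge i hi)]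
  calc ‖∑ k ∈ t, ∑ n ∈ block k with σ.symm n ∈ Ioc M m, v n‖
      ≤ ∑ k ∈ t, W k := (norm_sum_le _ _).trans (sum_le_sum fun k _ => hbound k M m)
    _ ≤ ‖∑ k ∈ t, W k‖ := Real.le_norm_self _
    _ < ε := hs t hts

end Blocks

end Tandori

/-- General Tandori theorem: unconditional a.e. convergence of the orthogonal series. -/
theorem tandori_unconditional_ae_convergence
    {X : Type*} [MeasurableSpace X] (μ : Measure X)
    {𝕜 : Type*} [RCLike 𝕜]
    {H : Type*} [NormedAddCommGroup H] [InnerProductSpace 𝕜 H] [CompleteSpace H]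
    (a : ℕ → 𝕜) (φ : ℕ → X → H)
    (hmem : ∀ n, 1 ≤ n → MemLp (φ n) 2 μ)
    (horth : ∀ n m, 1 ≤ n → 1 ≤ m →
      ∫ x, (inner 𝕜 (φ n x) (φ m x) : 𝕜) ∂μ = if n = m then (1 : 𝕜) else 0)
    (hA : Summable fun k : ℕ =>
      Real.sqrt (∑ n ∈ Finset.Icc (2 ^ 2 ^ k + 1) (2 ^ 2 ^ (k + 1)),
        ‖a n‖ ^ 2 * (Real.logb 2 (n : ℝ)) ^ 2)) :
    ∀ σ : Equiv.Perm ℕ, σ 0 = 0 →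
      ∀ᵐ x ∂μ, ∃ l : H,
        Tendsto (fun m : ℕ => ∑ n ∈ Finset.Icc 1 m, a (σ n) • φ (σ n) x) atTop (nhds l) := by
  intro σ _
  set W : ℕ → X → ℝ := fun k x =>
    Tandori.dyadicMajorant (Tandori.block k) σ.symm (2 ^ (k + 1)) fun n => a n • φ n x
  have hmem_block (k : ℕ) : ∀ n ∈ Tandori.block k, MemLp (φ n) 2 μ :=
    fun n hn => hmem n (Tandori.one_le_of_mem_block hn)
  have hW : ∀ᵐ x ∂μ, Summable fun k => ‖W k x‖ :=
    Tandori.ae_summable_norm_of_eLpNorm_le one_le_two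
      (fun k => Tandori.aestronglyMeasurable_dyadicMajorant
        (fun n hn => (hmem_block k n hn).1.const_smul (a n)) _ _)
      (hA.mul_left 3) (fun k => by positivity) fun k =>
        Tandori.eLpNorm_dyadicMajorant_block_le (hmem_block k) (fun n hn m hm =>
          horth n m (Tandori.one_le_of_mem_block hn) (Tandori.one_le_of_mem_block hm)) a σ.symm
  filter_upwards [hW] with x hx
  exact cauchySeq_tendsto_of_complete <| Tandori.cauchySeq_sum_perm_of_block_bound σ _
    (hx.of_norm.mul_left 2) fun k m m' =>
      Tandori.norm_sum_filter_Ioc_le_dyadicMajorant (Tandori.card_block_le k) _ _ m m'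
end

section
/- Let H be a real or complex Hilbert space, let r ≥ 1 be an integer, and let h_1, …, h_{2^r} be vectors in H. Then for every integer j with 1 ≤ j ≤ 2^r one has ‖Σ_{n=1}^j h_n‖_H² ≤ (r+1) · Σ_{k=0}^r Σ_{p=0}^{2^k − 1} ‖Σ_{n = p·2^{r−k}+1}^{(p+1)·2^{r−k}} h_n‖_H². -/
/-!
Round `j` down to a multiple of `2 ^ s` for `s = r + 1, r, …, 0`: this runs from `0` to `j`, and
two consecutive roundings differ either by nothing or by exactly one dyadic block of length
`2 ^ s` (according to the binary digit of `j` at position `s`). Hence `h 1 + ⋯ + h j` is a sum of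
`r + 1` terms, each zero or a dyadic block of its own level, and
`‖x 0 + ⋯ + x r‖ ^ 2 ≤ (r + 1) (‖x 0‖ ^ 2 + ⋯ + ‖x r‖ ^ 2)` concludes.
-/

open Finset

theorem Finset.sum_Ioc_eq_sum_range_sum_Ioc {M : Type*} [AddCommMonoid M] (f : ℕ → M)
    {e : ℕ → ℕ} (he : Monotone e) (m : ℕ) :
    ∑ n ∈ Ioc (e 0) (e m), f n = ∑ k ∈ range m, ∑ n ∈ Ioc (e k) (e (k + 1)), f n := by
  induction m with
  | zero => simp
  | succ m ih =>
    rw [sum_range_succ, ← ih, sum_Ioc_consecutive f (he (Nat.zero_le m)) (he (Nat.le_succ m))]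

theorem norm_sum_sq_le_card_mul_sum_norm_sq {ι E : Type*} [SeminormedAddCommGroup E]
    (s : Finset ι) (x : ι → E) : ‖∑ i ∈ s, x i‖ ^ 2 ≤ #s * ∑ i ∈ s, ‖x i‖ ^ 2 :=
  (pow_le_pow_left₀ (norm_nonneg _) (norm_sum_le s x) 2).trans sq_sum_le_card_mul_sum_sq

def dyadicFloor (j s : ℕ) : ℕ := j / 2 ^ s * 2 ^ s

theorem dyadicFloor_zero (j : ℕ) : dyadicFloor j 0 = j := by
  simp [dyadicFloor]

theorem dyadicFloor_eq_zero_of_lt {j s : ℕ} (hj : j < 2 ^ s) : dyadicFloor j s = 0 := by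
  simp [dyadicFloor, Nat.div_eq_of_lt hj]

theorem dyadicFloor_le (j s : ℕ) : dyadicFloor j s ≤ j :=
  Nat.div_mul_le_self j (2 ^ s)

theorem dyadicFloor_succ (j s : ℕ) : dyadicFloor j (s + 1) = j / 2 ^ s / 2 * 2 * 2 ^ s := by
  rw [dyadicFloor, Nat.div_div_eq_div_mul, pow_succ, mul_comm (2 ^ s) 2, mul_assoc]

theorem dyadicFloor_succ_eq_or (j s : ℕ) :
    dyadicFloor j (s + 1) = dyadicFloor j s ∨
      ∃ p, dyadicFloor j (s + 1) = p * 2 ^ s ∧ dyadicFloor j s = (p + 1) * 2 ^ s := by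
  rw [dyadicFloor_succ, dyadicFloor]
  rcases Nat.even_or_odd (j / 2 ^ s) with hq | hq
  · exact .inl (by rw [Nat.div_two_mul_two_of_even hq])
  · exact .inr ⟨_, rfl, by rw [Nat.div_two_mul_two_add_one_of_odd hq]⟩

theorem dyadicFloor_antitone (j : ℕ) : Antitone (dyadicFloor j) := by
  refine antitone_nat_of_succ_le fun s => ?_
  rcases dyadicFloor_succ_eq_or j s with h | ⟨p, hp, hp'⟩
  · exact h.le
  · rw [hp, hp']
    exact Nat.mul_le_mul_right _ p.le_succ

theorem norm_sum_Ioc_dyadicFloor_sq_le {E : Type*} [SeminormedAddCommGroup E] (h : ℕ → E)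
    {j k s : ℕ} (hj : j ≤ 2 ^ (k + s)) :
    ‖∑ n ∈ Ioc (dyadicFloor j (s + 1)) (dyadicFloor j s), h n‖ ^ 2 ≤
      ∑ p ∈ range (2 ^ k), ‖∑ n ∈ Ioc (p * 2 ^ s) ((p + 1) * 2 ^ s), h n‖ ^ 2 := by
  rcases dyadicFloor_succ_eq_or j s with heq | ⟨p, hp, hp'⟩
  · rw [heq, Ioc_self, sum_empty, norm_zero, sq, zero_mul]
    positivity
  · have hpk : p < 2 ^ k := by
      have : (p + 1) * 2 ^ s ≤ 2 ^ k * 2 ^ s := by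
        rw [← hp', ← pow_add]
        exact (dyadicFloor_le j s).trans hj
      exact Nat.lt_of_succ_le (Nat.le_of_mul_le_mul_right this (by positivity))
    rw [hp, hp']
    exact single_le_sum (f := fun p => ‖∑ n ∈ Ioc (p * 2 ^ s) ((p + 1) * 2 ^ s), h n‖ ^ 2)
      (fun _ _ => by positivity) (mem_range.mpr hpk)

theorem dyadic_block_inequality_general
    {H : Type*} [NormedAddCommGroup H]
    (r : ℕ) (h : ℕ → H) (j : ℕ) (hj2 : j ≤ 2 ^ r) :
    ‖∑ n ∈ Finset.Icc 1 j, h n‖ ^ 2 ≤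
      ((r : ℝ) + 1) * ∑ k ∈ Finset.range (r + 1), ∑ p ∈ Finset.range (2 ^ k),
        ‖∑ n ∈ Finset.Icc (p * 2 ^ (r - k) + 1) ((p + 1) * 2 ^ (r - k)), h n‖ ^ 2 := by
  rw [show Icc 1 j = Ioc 0 j from Icc_add_one_left_eq_Ioc 0 j]
  simp only [Icc_add_one_left_eq_Ioc]
  set e : ℕ → ℕ := fun k => dyadicFloor j (r + 1 - k)
  have he : Monotone e := (dyadicFloor_antitone j).comp fun _ _ _ => by omega
  have hsplit : ∑ n ∈ Ioc 0 j, h n = ∑ k ∈ range (r + 1), ∑ n ∈ Ioc (e k) (e (k + 1)), h n := by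
    have he0 : e 0 = 0 := dyadicFloor_eq_zero_of_lt (hj2.trans_lt (Nat.pow_lt_pow_succ one_lt_two))
    have her : e (r + 1) = j := by simp [e, dyadicFloor_zero]
    rw [← sum_Ioc_eq_sum_range_sum_Ioc h he, he0, her]
  calc ‖∑ n ∈ Ioc 0 j, h n‖ ^ 2
      ≤ ((r : ℝ) + 1) * ∑ k ∈ range (r + 1), ‖∑ n ∈ Ioc (e k) (e (k + 1)), h n‖ ^ 2 := by
        simpa [hsplit] using norm_sum_sq_le_card_mul_sum_norm_sq (range (r + 1)) _
    _ ≤ _ := by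
        gcongr with k hk
        have hkr : k ≤ r := Nat.lt_succ_iff.mp (mem_range.mp hk)
        simp only [e, show r + 1 - k = r - k + 1 by omega, show r + 1 - (k + 1) = r - k by omega]
        exact norm_sum_Ioc_dyadicFloor_sq_le h (by rwa [Nat.add_sub_cancel' hkr])

/-- Dyadic-block inequality for partial sums of vectors in a Hilbert space. -/
theorem dyadic_block_inequality
    {𝕜 : Type*} [RCLike 𝕜]
    {H : Type*} [NormedAddCommGroup H] [InnerProductSpace 𝕜 H]
    (r : ℕ) (hr : 1 ≤ r) (h : ℕ → H) (j : ℕ) (hj1 : 1 ≤ j) (hj2 : j ≤ 2 ^ r) :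
    ‖∑ n ∈ Finset.Icc 1 j, h n‖ ^ 2 ≤
      ((r : ℝ) + 1) * ∑ k ∈ Finset.range (r + 1), ∑ p ∈ Finset.range (2 ^ k),
        ‖∑ n ∈ Finset.Icc (p * 2 ^ (r - k) + 1) ((p + 1) * 2 ^ (r - k)), h n‖ ^ 2 :=
  dyadic_block_inequality_general r h j hj2
end
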